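/- arXiv:1512.03121 — 8 statements merged into one kernel-verified Lean document; each statement's English description precedes it below -/
import Mathlib

section
/- If the section σ : N → M is a solution of the Π-HJE for (M, X_H) and σ is isotropic, then d(H∘σ) = 0, i.e. the differential of the composite function H∘σ : N → ℝ vanishes at every point of N. -/
open Manifold Set

noncomputable section

/-! By the Hamilton–Jacobi equation, `X_H (σ n) = σ_* (Π_* X_H (σ n))` lies in `Im σ_{*,n}`.
Hence `d(H ∘ σ)_n w = dH (σ_* w) = ω (X_H (σ n)) (σ_* w)` pairs two vectors of the isotropic
subspace `Im σ_{*,n}`, and vanishes. -/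

theorem mfderiv_comp_eq_zero_of_forall_mfderiv_apply_eq_zero
    {𝕜 : Type*} [NontriviallyNormedField 𝕜]
    {E H M E' H' M' E'' H'' M'' : Type*}
    [NormedAddCommGroup E] [NormedSpace 𝕜 E] [TopologicalSpace H]
    [TopologicalSpace M] [ChartedSpace H M]
    [NormedAddCommGroup E'] [NormedSpace 𝕜 E'] [TopologicalSpace H']
    [TopologicalSpace M'] [ChartedSpace H' M']
    [NormedAddCommGroup E''] [NormedSpace 𝕜 E''] [TopologicalSpace H'']
    [TopologicalSpace M''] [ChartedSpace H'' M'']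
    {I : ModelWithCorners 𝕜 E H} {I' : ModelWithCorners 𝕜 E' H'}
    {I'' : ModelWithCorners 𝕜 E'' H''}
    {g : M' → M''} {f : M → M'} {x : M}
    (hg : MDifferentiableAt I' I'' g (f x)) (hf : MDifferentiableAt I I' f x)
    (h : ∀ v, mfderiv I' I'' g (f x) (mfderiv I I' f x v) = 0) :
    mfderiv I I'' (g ∘ f) x = 0 := by
  ext v
  exact (mfderiv_comp_apply x hg hf v).trans (h v)

theorem hje_solution_isotropic_implies_dHsigma_eq_zero_general
    {EM HM M EN HN N : Type*}
    [NormedAddCommGroup EM] [NormedSpace ℝ EM] [TopologicalSpace HM]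
    [TopologicalSpace M] [ChartedSpace HM M]
    [NormedAddCommGroup EN] [NormedSpace ℝ EN] [TopologicalSpace HN]
    [TopologicalSpace N] [ChartedSpace HN N]
    {IM : ModelWithCorners ℝ EM HM} {IN : ModelWithCorners ℝ EN HN}
    -- the fibration
    (π : M → N)
    -- the pointwise nondegenerate alternating bilinear form ω
    (ω : ∀ m : M, TangentSpace IM m →ₗ[ℝ] TangentSpace IM m →ₗ[ℝ] ℝ)
    -- the Hamiltonian and its (smooth) Hamiltonian vector field
    (H : M → ℝ) (hH : ContMDiff IM 𝓘(ℝ, ℝ) (⊤ : ℕ∞) H)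
    (XH : ∀ m : M, TangentSpace IM m)
    (hXH : ∀ (m : M) (v : TangentSpace IM m), ω m (XH m) v = mfderiv IM 𝓘(ℝ, ℝ) H m v)
    -- the section σ, a solution of the π-HJE for (M, X_H)
    (σ : N → M) (hσ : ContMDiff IN IM (⊤ : ℕ∞) σ)
    (hsol : ∀ n, mfderiv IN IM σ n (mfderiv IM IN π (σ n) (XH (σ n))) = XH (σ n))
    -- σ is isotropic: Im σ_{*,n} ⊆ (Im σ_{*,n})^ω
    (hiso : ∀ n : N, Set.range (mfderiv IN IM σ n) ⊆
      {u : TangentSpace IM (σ n) | ∀ v ∈ Set.range (mfderiv IN IM σ n), ω (σ n) v u = 0}) :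
    ∀ n : N, mfderiv IN 𝓘(ℝ, ℝ) (H ∘ σ) n = 0 := by
  intro n
  refine mfderiv_comp_eq_zero_of_forall_mfderiv_apply_eq_zero
    ((hH (σ n)).mdifferentiableAt (by simp)) ((hσ n).mdifferentiableAt (by simp)) fun w => ?_
  have hXH_mem_range : XH (σ n) ∈ range (mfderiv IN IM σ n) := ⟨_, hsol n⟩
  rw [← hXH]
  exact hiso n ⟨w, rfl⟩ _ hXH_mem_range

/-- If the section `σ` is a solution of the `π`-Hamilton–Jacobi equation for `(M, X_H)` and
`σ` is isotropic (each `Im σ_{*,n}` is contained in its symplectic orthogonal), then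
`d(H ∘ σ) = 0`. -/
theorem hje_solution_isotropic_implies_dHsigma_eq_zero
    {EM HM M EN HN N : Type*}
    [NormedAddCommGroup EM] [NormedSpace ℝ EM] [TopologicalSpace HM]
    [TopologicalSpace M] [ChartedSpace HM M]
    [NormedAddCommGroup EN] [NormedSpace ℝ EN] [TopologicalSpace HN]
    [TopologicalSpace N] [ChartedSpace HN N]
    {IM : ModelWithCorners ℝ EM HM} {IN : ModelWithCorners ℝ EN HN}
    [IsManifold IM (⊤ : ℕ∞) M] [IsManifold IN (⊤ : ℕ∞) N]
    [FiniteDimensional ℝ EM] [FiniteDimensional ℝ EN]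
    [IM.Boundaryless] [IN.Boundaryless]
    -- the fibration
    (π : M → N) (hπ : ContMDiff IM IN (⊤ : ℕ∞) π)
    (hπsurj : Function.Surjective π)
    (hπsub : ∀ m, Function.Surjective (mfderiv IM IN π m))
    -- the pointwise nondegenerate alternating bilinear form ω
    (ω : ∀ m : M, TangentSpace IM m →ₗ[ℝ] TangentSpace IM m →ₗ[ℝ] ℝ)
    (hωalt : ∀ (m : M) (v : TangentSpace IM m), ω m v v = 0)
    (hωnd : ∀ (m : M) (v : TangentSpace IM m), (∀ w, ω m v w = 0) → v = 0)
    -- the Hamiltonian and its (smooth) Hamiltonian vector field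
    (H : M → ℝ) (hH : ContMDiff IM 𝓘(ℝ, ℝ) (⊤ : ℕ∞) H)
    (XH : ∀ m : M, TangentSpace IM m)
    (hXHsmooth : ContMDiff IM IM.tangent (⊤ : ℕ∞) (fun m => (⟨m, XH m⟩ : TangentBundle IM M)))
    (hXH : ∀ (m : M) (v : TangentSpace IM m), ω m (XH m) v = mfderiv IM 𝓘(ℝ, ℝ) H m v)
    -- the section σ, a solution of the π-HJE for (M, X_H)
    (σ : N → M) (hσ : ContMDiff IN IM (⊤ : ℕ∞) σ) (hsec : ∀ n, π (σ n) = n)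
    (hsol : ∀ n, mfderiv IN IM σ n (mfderiv IM IN π (σ n) (XH (σ n))) = XH (σ n))
    -- σ is isotropic: Im σ_{*,n} ⊆ (Im σ_{*,n})^ω
    (hiso : ∀ n : N, Set.range (mfderiv IN IM σ n) ⊆
      {u : TangentSpace IM (σ n) | ∀ v ∈ Set.range (mfderiv IN IM σ n), ω (σ n) v u = 0}) :
    ∀ n : N, mfderiv IN 𝓘(ℝ, ℝ) (H ∘ σ) n = 0 :=
  hje_solution_isotropic_implies_dHsigma_eq_zero_general π ω H hH XH hXH σ hσ hsol hiso
end
end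

section
/- Let σ : N → M be a smooth section of Π satisfying d(H∘σ) = i_{X_H^σ} σ*ω, i.e. d(H∘σ)_n(y) = ω_{σ(n)}(σ_{*,n}(X_H^σ(n)), σ_{*,n}(y)) for all n ∈ N and y ∈ T_nN. Then for every n ∈ N the vector X_H(σ(n)) − σ_{*,n}(X_H^σ(n)) belongs to Ker Π_{*,σ(n)} ∩ (Im σ_{*,n})^ω, where X_H^σ(n) := Π_{*,σ(n)}(X_H(σ(n))). -/
open Manifold Set

noncomputable section

/-!
Pointwise this is linear algebra. The chain rule turns `π ∘ σ = id` into `π_* σ_* = id`, so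
`X_H - σ_* π_* X_H` is killed by `π_*`. The chain rule also turns `d(H ∘ σ) = i_{X_H^σ} σ*ω` into
`ω(X_H, σ_* y) = ω(σ_* π_* X_H, σ_* y)`, and since `ω` is alternating, hence skew, this says that
`X_H - σ_* π_* X_H` is `ω`-orthogonal to the image of `σ_*`.
-/

namespace LinearMap

variable {R V W : Type*} [CommRing R] [AddCommGroup V] [Module R V] [AddCommGroup W] [Module R W]

theorem sub_apply_mem_ker_of_leftInverse {p : V →ₗ[R] W} {s : W →ₗ[R] V}
    (h : Function.LeftInverse p s) (x : V) : x - s (p x) ∈ ker p := by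
  rw [mem_ker, map_sub, h, sub_self]

theorem IsAlt.sub_mem_orthogonalBilin {ω : V →ₗ[R] V →ₗ[R] R} (hω : ω.IsAlt)
    {U : Submodule R V} {x z : V} (h : ∀ u ∈ U, ω x u = ω z u) :
    x - z ∈ U.orthogonalBilin ω := fun u hu => by
  rw [map_sub, ← hω.neg x u, ← hω.neg z u, h u hu, sub_self]

theorem sub_apply_mem_ker_inf_orthogonalBilin_range {p : V →ₗ[R] W} {s : W →ₗ[R] V}
    (h : Function.LeftInverse p s) {ω : V →ₗ[R] V →ₗ[R] R} (hω : ω.IsAlt) {x : V}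
    (hx : ∀ y, ω x (s y) = ω (s (p x)) (s y)) :
    x - s (p x) ∈ ker p ⊓ (range s).orthogonalBilin ω :=
  ⟨sub_apply_mem_ker_of_leftInverse h x,
    hω.sub_mem_orthogonalBilin fun _ ⟨y, hy⟩ => hy ▸ hx y⟩

end LinearMap

theorem mfderiv_apply_mfderiv_of_leftInverse
    {𝕜 EM HM M EN HN N : Type*} [NontriviallyNormedField 𝕜]
    [NormedAddCommGroup EM] [NormedSpace 𝕜 EM] [TopologicalSpace HM]
    [TopologicalSpace M] [ChartedSpace HM M]
    [NormedAddCommGroup EN] [NormedSpace 𝕜 EN] [TopologicalSpace HN]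
    [TopologicalSpace N] [ChartedSpace HN N]
    {IM : ModelWithCorners 𝕜 EM HM} {IN : ModelWithCorners 𝕜 EN HN}
    {π : M → N} {σ : N → M} (h : Function.LeftInverse π σ) {n : N}
    (hπ : MDifferentiableAt IM IN π (σ n)) (hσ : MDifferentiableAt IN IM σ n) :
    ∀ y : TangentSpace IN n, mfderiv IM IN π (σ n) (mfderiv IN IM σ n y) = y := fun y => by
  rw [← mfderiv_comp_apply n hπ hσ, h.comp_eq_id, mfderiv_id]
  rfl

theorem defect_in_ker_inter_sympOrth_of_contraction_eq_general
    {EM HM M EN HN N : Type*}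
    [NormedAddCommGroup EM] [NormedSpace ℝ EM] [TopologicalSpace HM]
    [TopologicalSpace M] [ChartedSpace HM M]
    [NormedAddCommGroup EN] [NormedSpace ℝ EN] [TopologicalSpace HN]
    [TopologicalSpace N] [ChartedSpace HN N]
    {IM : ModelWithCorners ℝ EM HM} {IN : ModelWithCorners ℝ EN HN}
    -- the fibration
    (π : M → N) (hπ : ContMDiff IM IN (⊤ : ℕ∞) π)
    -- the pointwise nondegenerate alternating bilinear form ω
    (ω : ∀ m : M, TangentSpace IM m →ₗ[ℝ] TangentSpace IM m →ₗ[ℝ] ℝ)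
    (hωalt : ∀ (m : M) (v : TangentSpace IM m), ω m v v = 0)
    -- the Hamiltonian and its (smooth) Hamiltonian vector field
    (H : M → ℝ) (hH : ContMDiff IM 𝓘(ℝ, ℝ) (⊤ : ℕ∞) H)
    (XH : ∀ m : M, TangentSpace IM m)
    (hXH : ∀ (m : M) (v : TangentSpace IM m), ω m (XH m) v = mfderiv IM 𝓘(ℝ, ℝ) H m v)
    -- the section σ of π, satisfying d(H∘σ) = i_{X_H^σ} σ*ω
    (σ : N → M) (hσ : ContMDiff IN IM (⊤ : ℕ∞) σ) (hsec : ∀ n, π (σ n) = n)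
    (heq : ∀ (n : N) (y : TangentSpace IN n),
      mfderiv IN 𝓘(ℝ, ℝ) (H ∘ σ) n y =
        ω (σ n) (mfderiv IN IM σ n (mfderiv IM IN π (σ n) (XH (σ n))))
          (mfderiv IN IM σ n y)) :
    ∀ n : N,
      mfderiv IM IN π (σ n)
          (XH (σ n) - mfderiv IN IM σ n (mfderiv IM IN π (σ n) (XH (σ n)))) = 0 ∧
      ∀ v ∈ Set.range (mfderiv IN IM σ n),
        ω (σ n) v (XH (σ n) - mfderiv IN IM σ n (mfderiv IM IN π (σ n) (XH (σ n)))) = 0 := by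
  intro n
  have hσn : MDifferentiableAt IN IM σ n := hσ.mdifferentiableAt (by simp)
  have hπσn : MDifferentiableAt IM IN π (σ n) := hπ.mdifferentiableAt (by simp)
  have hHσn : MDifferentiableAt IM 𝓘(ℝ, ℝ) H (σ n) := hH.mdifferentiableAt (by simp)
  have hcontr : ∀ y, ω (σ n) (XH (σ n)) (mfderiv IN IM σ n y) =
      ω (σ n) (mfderiv IN IM σ n (mfderiv IM IN π (σ n) (XH (σ n)))) (mfderiv IN IM σ n y) :=
    fun y => by rw [hXH, ← mfderiv_comp_apply n hHσn hσn, heq]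
  obtain ⟨hker, horth⟩ := LinearMap.sub_apply_mem_ker_inf_orthogonalBilin_range
    (p := (mfderiv IM IN π (σ n)).toLinearMap) (s := (mfderiv IN IM σ n).toLinearMap)
    (mfderiv_apply_mfderiv_of_leftInverse hsec hπσn hσn) (hωalt (σ n)) hcontr
  exact ⟨hker, fun v hv => horth v hv⟩

/-- If a section `σ` of `π` satisfies `d(H∘σ) = i_{X_H^σ} σ*ω`, then for every `n` the vector
`X_H(σ(n)) − σ_{*,n}(X_H^σ(n))` lies in `Ker π_{*,σ(n)} ∩ (Im σ_{*,n})^ω`. -/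
theorem defect_in_ker_inter_sympOrth_of_contraction_eq
    {EM HM M EN HN N : Type*}
    [NormedAddCommGroup EM] [NormedSpace ℝ EM] [TopologicalSpace HM]
    [TopologicalSpace M] [ChartedSpace HM M]
    [NormedAddCommGroup EN] [NormedSpace ℝ EN] [TopologicalSpace HN]
    [TopologicalSpace N] [ChartedSpace HN N]
    {IM : ModelWithCorners ℝ EM HM} {IN : ModelWithCorners ℝ EN HN}
    [IsManifold IM ((⊤ : ℕ∞) : WithTop ℕ∞) M] [IsManifold IN ((⊤ : ℕ∞) : WithTop ℕ∞) N]
    [FiniteDimensional ℝ EM] [FiniteDimensional ℝ EN]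
    [IM.Boundaryless] [IN.Boundaryless]
    -- the fibration
    (π : M → N) (hπ : ContMDiff IM IN (⊤ : ℕ∞) π)
    (hπsurj : Function.Surjective π)
    (hπsub : ∀ m, Function.Surjective (mfderiv IM IN π m))
    -- the pointwise nondegenerate alternating bilinear form ω
    (ω : ∀ m : M, TangentSpace IM m →ₗ[ℝ] TangentSpace IM m →ₗ[ℝ] ℝ)
    (hωalt : ∀ (m : M) (v : TangentSpace IM m), ω m v v = 0)
    (hωnd : ∀ (m : M) (v : TangentSpace IM m), (∀ w, ω m v w = 0) → v = 0)
    -- the Hamiltonian and its (smooth) Hamiltonian vector field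
    (H : M → ℝ) (hH : ContMDiff IM 𝓘(ℝ, ℝ) (⊤ : ℕ∞) H)
    (XH : ∀ m : M, TangentSpace IM m)
    (hXHsmooth : ContMDiff IM IM.tangent (⊤ : ℕ∞) (fun m => (⟨m, XH m⟩ : TangentBundle IM M)))
    (hXH : ∀ (m : M) (v : TangentSpace IM m), ω m (XH m) v = mfderiv IM 𝓘(ℝ, ℝ) H m v)
    -- the section σ of π, satisfying d(H∘σ) = i_{X_H^σ} σ*ω
    (σ : N → M) (hσ : ContMDiff IN IM (⊤ : ℕ∞) σ) (hsec : ∀ n, π (σ n) = n)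
    (heq : ∀ (n : N) (y : TangentSpace IN n),
      mfderiv IN 𝓘(ℝ, ℝ) (H ∘ σ) n y =
        ω (σ n) (mfderiv IN IM σ n (mfderiv IM IN π (σ n) (XH (σ n))))
          (mfderiv IN IM σ n y)) :
    ∀ n : N,
      mfderiv IM IN π (σ n)
          (XH (σ n) - mfderiv IN IM σ n (mfderiv IM IN π (σ n) (XH (σ n)))) = 0 ∧
      ∀ v ∈ Set.range (mfderiv IN IM σ n),
        ω (σ n) v (XH (σ n) - mfderiv IN IM σ n (mfderiv IM IN π (σ n) (XH (σ n)))) = 0 :=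
  defect_in_ker_inter_sympOrth_of_contraction_eq_general π hπ ω hωalt H hH XH hXH σ hσ hsec heq
end
end

section
/- Suppose the fibration Π is isotropic (in particular this holds if Π is Lagrangian). Then a smooth section σ : N → M of Π is a solution of the Π-HJE for (M, X_H) if and only if d(H∘σ) = i_{X_H^σ} σ*ω, i.e. if and only if d(H∘σ)_n(y) = ω_{σ(n)}(σ_{*,n}(X_H^σ(n)), σ_{*,n}(y)) for all n ∈ N and y ∈ T_nN, where X_H^σ(n) := Π_{*,σ(n)}(X_H(σ(n))). -/
open Manifold

/-!
Let `p` be a linear map with a linear right inverse `s`, so that every vector splits as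
`w = s (p w) + (w - s (p w))` with the second summand in `ker p`. If `ker p` is isotropic for a
left-separating form `ω`, a vector `u ∈ ker p` that is `ω`-orthogonal to `range s` is then
`ω`-orthogonal to everything, hence zero. Applied to `u = X_H - σ_* π_* X_H` at each point of the
section, and using `dH = ω(X_H, ·)` with the chain rule `d(H ∘ σ) = dH ∘ σ_*`, this turns the
Hamilton–Jacobi equation `σ_* π_* X_H = X_H` into the contraction identity.
-/

namespace LinearMap.BilinForm

variable {R V W : Type*} [CommRing R] [AddCommGroup V] [Module R V] [AddCommGroup W] [Module R W]
  {ω : LinearMap.BilinForm R V} {p : V →ₗ[R] W} {s : W →ₗ[R] V}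

theorem sub_section_apply_mem_ker (hps : Function.LeftInverse p s) (w : V) :
    w - s (p w) ∈ LinearMap.ker p := by
  rw [LinearMap.mem_ker, map_sub, hps, sub_self]

theorem eq_zero_of_mem_ker_of_apply_section_eq_zero (hω : ω.SeparatingLeft)
    (hiso : LinearMap.ker p ≤ ω.orthogonal (LinearMap.ker p)) (hps : Function.LeftInverse p s)
    {u : V} (hu : u ∈ LinearMap.ker p) (hus : ∀ y, ω u (s y) = 0) : u = 0 := by
  refine hω u fun w => ?_
  have hvert : ω u (w - s (p w)) = 0 := hiso (sub_section_apply_mem_ker hps w) u hu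
  rwa [map_sub, hus, sub_zero] at hvert

theorem section_apply_eq_iff (hω : ω.SeparatingLeft)
    (hiso : LinearMap.ker p ≤ ω.orthogonal (LinearMap.ker p)) (hps : Function.LeftInverse p s)
    (x : V) : s (p x) = x ↔ ∀ y, ω x (s y) = ω (s (p x)) (s y) := by
  refine ⟨fun hx y => by rw [hx], fun hx => ?_⟩
  have hzero := eq_zero_of_mem_ker_of_apply_section_eq_zero hω hiso hps
    (sub_section_apply_mem_ker hps x) fun y => by rw [map_sub, LinearMap.sub_apply, hx, sub_self]
  exact (sub_eq_zero.mp hzero).symm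

end LinearMap.BilinForm

theorem Function.LeftInverse.mfderiv
    {𝕜 EM HM M EN HN N : Type*} [NontriviallyNormedField 𝕜]
    [NormedAddCommGroup EM] [NormedSpace 𝕜 EM] [TopologicalSpace HM]
    [TopologicalSpace M] [ChartedSpace HM M]
    [NormedAddCommGroup EN] [NormedSpace 𝕜 EN] [TopologicalSpace HN]
    [TopologicalSpace N] [ChartedSpace HN N]
    {IM : ModelWithCorners 𝕜 EM HM} {IN : ModelWithCorners 𝕜 EN HN}
    {π : M → N} {σ : N → M} (hsec : Function.LeftInverse π σ) {n : N}
    (hπ : MDifferentiableAt IM IN π (σ n)) (hσ : MDifferentiableAt IN IM σ n) :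
    Function.LeftInverse (mfderiv IM IN π (σ n)) (mfderiv IN IM σ n) := by
  have hcomp := mfderiv_comp n hπ hσ
  rw [hsec.comp_eq_id, mfderiv_id] at hcomp
  exact fun y => (DFunLike.congr_fun hcomp y).symm

theorem hje_solution_iff_contraction_of_isotropic_fibration_general
    {EM HM M EN HN N : Type*}
    [NormedAddCommGroup EM] [NormedSpace ℝ EM] [TopologicalSpace HM]
    [TopologicalSpace M] [ChartedSpace HM M]
    [NormedAddCommGroup EN] [NormedSpace ℝ EN] [TopologicalSpace HN]
    [TopologicalSpace N] [ChartedSpace HN N]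
    {IM : ModelWithCorners ℝ EM HM} {IN : ModelWithCorners ℝ EN HN}
    -- the fibration
    (π : M → N) (hπ : ContMDiff IM IN (⊤ : ℕ∞) π)
    -- the pointwise nondegenerate alternating bilinear form ω
    (ω : ∀ m : M, TangentSpace IM m →ₗ[ℝ] TangentSpace IM m →ₗ[ℝ] ℝ)
    (hωnd : ∀ (m : M) (v : TangentSpace IM m), (∀ w, ω m v w = 0) → v = 0)
    -- the fibration π is isotropic: Ker π_{*,m} ⊆ (Ker π_{*,m})^ω
    (hπiso : ∀ (m : M) (u v : TangentSpace IM m),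
      mfderiv IM IN π m v = 0 → mfderiv IM IN π m u = 0 → ω m v u = 0)
    -- the Hamiltonian and its (smooth) Hamiltonian vector field
    (H : M → ℝ) (hH : ContMDiff IM 𝓘(ℝ, ℝ) (⊤ : ℕ∞) H)
    (XH : ∀ m : M, TangentSpace IM m)
    (hXH : ∀ (m : M) (v : TangentSpace IM m), ω m (XH m) v = mfderiv IM 𝓘(ℝ, ℝ) H m v)
    -- the section σ of π
    (σ : N → M) (hσ : ContMDiff IN IM (⊤ : ℕ∞) σ) (hsec : ∀ n, π (σ n) = n) :
    (∀ n, mfderiv IN IM σ n (mfderiv IM IN π (σ n) (XH (σ n))) = XH (σ n)) ↔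
      (∀ (n : N) (y : TangentSpace IN n),
        mfderiv IN 𝓘(ℝ, ℝ) (H ∘ σ) n y =
          ω (σ n) (mfderiv IN IM σ n (mfderiv IM IN π (σ n) (XH (σ n))))
            (mfderiv IN IM σ n y)) := by
  refine forall_congr' fun n => ?_
  have hπd : MDifferentiableAt IM IN π (σ n) := hπ.mdifferentiableAt (by simp)
  have hσd : MDifferentiableAt IN IM σ n := hσ.mdifferentiableAt (by simp)
  have hHd : MDifferentiableAt IM 𝓘(ℝ, ℝ) H (σ n) := hH.mdifferentiableAt (by simp)
  have hchain (y : TangentSpace IN n) :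
      mfderiv IN 𝓘(ℝ, ℝ) (H ∘ σ) n y = ω (σ n) (XH (σ n)) (mfderiv IN IM σ n y) := by
    rw [mfderiv_comp_apply n hHd hσd, hXH]
  simp only [hchain]
  exact LinearMap.BilinForm.section_apply_eq_iff (hωnd (σ n))
    (fun v hv u hu => hπiso (σ n) v u hu hv) (Function.LeftInverse.mfderiv hsec hπd hσd) _

/-- If the fibration `π` is isotropic, then a section `σ` of `π` is a solution of the
`π`-Hamilton–Jacobi equation for `(M, X_H)` if and only if `d(H∘σ) = i_{X_H^σ} σ*ω`. -/
theorem hje_solution_iff_contraction_of_isotropic_fibration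
    {EM HM M EN HN N : Type*}
    [NormedAddCommGroup EM] [NormedSpace ℝ EM] [TopologicalSpace HM]
    [TopologicalSpace M] [ChartedSpace HM M]
    [NormedAddCommGroup EN] [NormedSpace ℝ EN] [TopologicalSpace HN]
    [TopologicalSpace N] [ChartedSpace HN N]
    {IM : ModelWithCorners ℝ EM HM} {IN : ModelWithCorners ℝ EN HN}
    [IsManifold IM (⊤ : ℕ∞) M] [IsManifold IN (⊤ : ℕ∞) N]
    [FiniteDimensional ℝ EM] [FiniteDimensional ℝ EN]
    [IM.Boundaryless] [IN.Boundaryless]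
    -- the fibration
    (π : M → N) (hπ : ContMDiff IM IN (⊤ : ℕ∞) π)
    (hπsurj : Function.Surjective π)
    (hπsub : ∀ m, Function.Surjective (mfderiv IM IN π m))
    -- the pointwise nondegenerate alternating bilinear form ω
    (ω : ∀ m : M, TangentSpace IM m →ₗ[ℝ] TangentSpace IM m →ₗ[ℝ] ℝ)
    (hωalt : ∀ (m : M) (v : TangentSpace IM m), ω m v v = 0)
    (hωnd : ∀ (m : M) (v : TangentSpace IM m), (∀ w, ω m v w = 0) → v = 0)
    -- the fibration π is isotropic: Ker π_{*,m} ⊆ (Ker π_{*,m})^ω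
    (hπiso : ∀ (m : M) (u v : TangentSpace IM m),
      mfderiv IM IN π m v = 0 → mfderiv IM IN π m u = 0 → ω m v u = 0)
    -- the Hamiltonian and its (smooth) Hamiltonian vector field
    (H : M → ℝ) (hH : ContMDiff IM 𝓘(ℝ, ℝ) (⊤ : ℕ∞) H)
    (XH : ∀ m : M, TangentSpace IM m)
    (hXHsmooth : ContMDiff IM IM.tangent (⊤ : ℕ∞) (fun m => (⟨m, XH m⟩ : TangentBundle IM M)))
    (hXH : ∀ (m : M) (v : TangentSpace IM m), ω m (XH m) v = mfderiv IM 𝓘(ℝ, ℝ) H m v)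
    -- the section σ of π
    (σ : N → M) (hσ : ContMDiff IN IM (⊤ : ℕ∞) σ) (hsec : ∀ n, π (σ n) = n) :
    (∀ n, mfderiv IN IM σ n (mfderiv IM IN π (σ n) (XH (σ n))) = XH (σ n)) ↔
      (∀ (n : N) (y : TangentSpace IN n),
        mfderiv IN 𝓘(ℝ, ℝ) (H ∘ σ) n y =
          ω (σ n) (mfderiv IN IM σ n (mfderiv IM IN π (σ n) (XH (σ n))))
            (mfderiv IN IM σ n y)) :=
  hje_solution_iff_contraction_of_isotropic_fibration_general π hπ ω hωnd hπiso H hH XH hXH σ hσ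
    hsec
end

section
/- A surjective local diffeomorphism Σ : N × Λ → M is a complete solution of the Π-HJE for (M,X) if and only if Π ∘ Σ = p_N and Σ_* ∘ X^Σ = X ∘ Σ, where X^Σ is the vector field on N × Λ given by X^Σ(n,λ) = (Π_{*,Σ(n,λ)}(X(Σ(n,λ))), 0) (equivalently, X^Σ is the unique vector field with (p_N)_* ∘ X^Σ = Π_* ∘ X ∘ Σ and (p_Λ)_* ∘ X^Σ = 0). In particular, in that case X and X^Σ are Σ-related. -/
open Manifold Set

/-! `σ_λ = Σ ∘ ι_λ` with `ι_λ n = (n, λ)`, and `(ι_λ)_* v = (v, 0)`; so by the chain rule the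
`Π`-HJE for `σ_λ` at `n` is exactly `Σ_* (X^Σ (n, λ)) = X (Σ (n, λ))`, while `Π ∘ σ_λ = id` for all
`λ` is `Π ∘ Σ = p_N`. -/

section

variable {𝕜 : Type*} [NontriviallyNormedField 𝕜]
  {E H M E' H' M' E'' H'' M'' : Type*}
  [NormedAddCommGroup E] [NormedSpace 𝕜 E] [TopologicalSpace H] [TopologicalSpace M]
  [ChartedSpace H M] {I : ModelWithCorners 𝕜 E H}
  [NormedAddCommGroup E'] [NormedSpace 𝕜 E'] [TopologicalSpace H'] [TopologicalSpace M']
  [ChartedSpace H' M'] {I' : ModelWithCorners 𝕜 E' H'}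
  [NormedAddCommGroup E''] [NormedSpace 𝕜 E''] [TopologicalSpace H''] [TopologicalSpace M'']
  [ChartedSpace H'' M''] {I'' : ModelWithCorners 𝕜 E'' H''}

theorem mfderiv_comp_prodMk_const_apply {f : M × M' → M''} {x : M} {y : M'}
    (hf : MDifferentiableAt (I.prod I') I'' f (x, y)) (v : TangentSpace I x) :
    mfderiv I I'' (fun x' => f (x', y)) x v =
      mfderiv (I.prod I') I'' f (x, y) ((v, 0) : TangentSpace I x × TangentSpace I' y) := by
  have hslice : MDifferentiableAt I (I.prod I') (fun x' : M => (x', y)) x :=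
    mdifferentiableAt_id.prodMk mdifferentiableAt_const
  rw [show (fun x' => f (x', y)) = f ∘ fun x' => (x', y) from rfl,
    mfderiv_comp_apply x hf hslice, mfderiv_prod_left]
  rfl

end

theorem complete_solution_iff_sigma_related_general
    {EM HM M EN HN N EL HL Λ : Type*}
    [NormedAddCommGroup EM] [NormedSpace ℝ EM] [TopologicalSpace HM]
    [TopologicalSpace M] [ChartedSpace HM M]
    [NormedAddCommGroup EN] [NormedSpace ℝ EN] [TopologicalSpace HN]
    [TopologicalSpace N] [ChartedSpace HN N]
    [NormedAddCommGroup EL] [NormedSpace ℝ EL] [TopologicalSpace HL]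
    [TopologicalSpace Λ] [ChartedSpace HL Λ]
    {IM : ModelWithCorners ℝ EM HM} {IN : ModelWithCorners ℝ EN HN}
    {IL : ModelWithCorners ℝ EL HL}
    -- the fibration
    (π : M → N)
    -- the (smooth) vector field X
    (X : ∀ m : M, TangentSpace IM m)
    -- Σ : N × Λ → M, a surjective local diffeomorphism
    (S : N × Λ → M)
    (hSdiff : IsLocalDiffeomorph (IN.prod IL) IM (⊤ : ℕ∞) S) :
    -- Σ is a complete solution (each σ_lam is a section of π solving the π-HJE) iff ...
    (∀ lam : Λ, (∀ n, π (S (n, lam)) = n) ∧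
      ∀ n, mfderiv IN IM (fun n' => S (n', lam)) n
          (mfderiv IM IN π (S (n, lam)) (X (S (n, lam)))) = X (S (n, lam))) ↔
    ((∀ p : N × Λ, π (S p) = p.1) ∧
      ∀ p : N × Λ,
        mfderiv (IN.prod IL) IM S p
            ((mfderiv IM IN π (S p) (X (S p)), 0) :
              TangentSpace IN p.1 × TangentSpace IL p.2) = X (S p)) := by
  have hS := hSdiff.mdifferentiable (by simp)
  have slice n lam v := mfderiv_comp_prodMk_const_apply (hS (n, lam)) v
  constructor
  · intro h
    exact ⟨fun p => (h p.2).1 p.1, fun ⟨n, lam⟩ => (slice n lam _).symm.trans ((h lam).2 n)⟩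
  · rintro ⟨hsection, hrelated⟩ lam
    exact ⟨fun n => hsection (n, lam), fun n => (slice n lam _).trans (hrelated (n, lam))⟩

/-- A surjective local diffeomorphism `Σ : N × Λ → M` is a complete solution of the
`π`-Hamilton–Jacobi equation for `(M, X)` iff `π ∘ Σ = p_N` and `Σ_* ∘ X^Σ = X ∘ Σ`,
where `X^Σ(n,λ) = (π_{*}(X(Σ(n,λ))), 0)`; in particular `X` and `X^Σ` are `Σ`-related. -/
theorem complete_solution_iff_sigma_related
    {EM HM M EN HN N EL HL Λ : Type*}
    [NormedAddCommGroup EM] [NormedSpace ℝ EM] [TopologicalSpace HM]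
    [TopologicalSpace M] [ChartedSpace HM M]
    [NormedAddCommGroup EN] [NormedSpace ℝ EN] [TopologicalSpace HN]
    [TopologicalSpace N] [ChartedSpace HN N]
    [NormedAddCommGroup EL] [NormedSpace ℝ EL] [TopologicalSpace HL]
    [TopologicalSpace Λ] [ChartedSpace HL Λ]
    {IM : ModelWithCorners ℝ EM HM} {IN : ModelWithCorners ℝ EN HN}
    {IL : ModelWithCorners ℝ EL HL}
    [IsManifold IM (⊤ : ℕ∞) M] [IsManifold IN (⊤ : ℕ∞) N]
    [IsManifold IL (⊤ : ℕ∞) Λ]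
    [FiniteDimensional ℝ EM] [FiniteDimensional ℝ EN] [FiniteDimensional ℝ EL]
    [IM.Boundaryless] [IN.Boundaryless] [IL.Boundaryless]
    -- dim Λ = dim M - dim N
    (hdim : Module.finrank ℝ EL = Module.finrank ℝ EM - Module.finrank ℝ EN)
    -- the fibration
    (π : M → N) (hπ : ContMDiff IM IN (⊤ : ℕ∞) π)
    (hπsurj : Function.Surjective π)
    (hπsub : ∀ m, Function.Surjective (mfderiv IM IN π m))
    -- the (smooth) vector field X
    (X : ∀ m : M, TangentSpace IM m)
    (hX : ContMDiff IM IM.tangent (⊤ : ℕ∞) (fun m => (⟨m, X m⟩ : TangentBundle IM M)))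
    -- Σ : N × Λ → M, a surjective local diffeomorphism
    (S : N × Λ → M)
    (hSsurj : Function.Surjective S)
    (hSdiff : IsLocalDiffeomorph (IN.prod IL) IM (⊤ : ℕ∞) S) :
    -- Σ is a complete solution (each σ_lam is a section of π solving the π-HJE) iff ...
    (∀ lam : Λ, (∀ n, π (S (n, lam)) = n) ∧
      ∀ n, mfderiv IN IM (fun n' => S (n', lam)) n
          (mfderiv IM IN π (S (n, lam)) (X (S (n, lam)))) = X (S (n, lam))) ↔
    ((∀ p : N × Λ, π (S p) = p.1) ∧
      ∀ p : N × Λ,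
        mfderiv (IN.prod IL) IM S p
            ((mfderiv IM IN π (S p) (X (S p)), 0) :
              TangentSpace IN p.1 × TangentSpace IL p.2) = X (S p)) :=
  complete_solution_iff_sigma_related_general π X S hSdiff
end

section
/- Assume N is connected. (1) If Σ : N × Λ → M is a complete solution of the Π-HJE for (M, X_H) such that each partial map σ_λ := Σ(·,λ) is isotropic, then there exists a unique function h : Λ → ℝ such that H ∘ Σ = h ∘ p_Λ, i.e. H(Σ(n,λ)) = h(λ) for all (n,λ) ∈ N × Λ. (2) If Σ : N × Λ → M is a surjective local diffeomorphism such that each σ_λ is Lagrangian (i.e. both isotropic and co-isotropic), then Σ is a complete solution of the Π-HJE for (M, X_H) if and only if Π ∘ Σ = p_N and H ∘ Σ = h ∘ p_Λ for a (unique) function h : Λ → ℝ. -/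
/-!
The Hamilton–Jacobi equation `σ_* π_* X_H = X_H` says that `X_H` is tangent to the image of
`σ_λ`. Weak isotropy then writes `X_H = Ξ♯ α` with `α` annihilating `Im σ_*`, and since
`Ξ♯op` is minus the transpose of `Ξ♯`, on `Im σ_* ⊆ Im Ξ♯op` the form `dH` agrees with `α`;
so `dH` vanishes along `σ_λ`, and `H ∘ σ_λ` is constant because `N` is connected.
Conversely, if `H ∘ σ_λ` is constant then `dH` annihilates `Im σ_*`, co-isotropy puts
`X_H = Ξ♯ dH` in `Im σ_*`, and on the image of `σ_*` for a section `σ` the map `σ_* ∘ π_*` is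
the identity.
-/

open Manifold Set

noncomputable section

section

variable {E H M F : Type*} [NormedAddCommGroup E] [NormedSpace ℝ E] [TopologicalSpace H]
  [TopologicalSpace M] [ChartedSpace H M] {I : ModelWithCorners ℝ E H}
  [IsManifold I 1 M] [I.Boundaryless] [NormedAddCommGroup F] [NormedSpace ℝ F]

-- In the chart `e` at `x`, `f ∘ e.symm` has zero derivative on the open set `e.target`.
theorem isLocallyConstant_of_mfderiv_eq_zero {f : M → F} (hf : MDifferentiable I 𝓘(ℝ, F) f)
    (hf' : ∀ x, mfderiv I 𝓘(ℝ, F) f x = 0) : IsLocallyConstant f := by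
  refine (IsLocallyConstant.iff_exists_open f).2 fun x => ?_
  set e := extChartAt I x
  have hsymm : ∀ z ∈ e.target, MDifferentiableAt 𝓘(ℝ, E) I e.symm z := fun z hz =>
    (mdifferentiableWithinAt_extChartAt_symm hz).mdifferentiableAt
      (by rw [I.range_eq_univ]; exact Filter.univ_mem)
  have hopen : IsOpen (e.target ∩ (f ∘ e.symm) ⁻¹' {f x}) := by
    refine (isOpen_extChartAt_target x).isOpen_inter_preimage_of_fderiv_eq_zero (𝕜 := ℝ)
      (fun z hz => ?_) (fun z hz => ?_) _
    · exact (mdifferentiableAt_iff_differentiableAt.1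
        ((hf _).comp z (hsymm z hz))).differentiableWithinAt
    · rw [← mfderiv_eq_fderiv, mfderiv_comp z (hf _) (hsymm z hz), hf',
        ContinuousLinearMap.zero_comp]
      rfl
  refine ⟨e.source ∩ e ⁻¹' (e.target ∩ (f ∘ e.symm) ⁻¹' {f x}),
    (continuousOn_extChartAt x).isOpen_inter_preimage (isOpen_extChartAt_source x) hopen,
    ⟨mem_extChartAt_source x, mem_extChartAt_target x, ?_⟩, ?_⟩
  · simp [e.left_inv (mem_extChartAt_source x)]
  · rintro y ⟨hy, -, hfy⟩
    simpa [e.left_inv hy] using hfy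

end

section

variable {EM HM M EN HN N F : Type*}
  [NormedAddCommGroup EM] [NormedSpace ℝ EM] [TopologicalSpace HM]
  [TopologicalSpace M] [ChartedSpace HM M] {IM : ModelWithCorners ℝ EM HM}
  [NormedAddCommGroup EN] [NormedSpace ℝ EN] [TopologicalSpace HN]
  [TopologicalSpace N] [ChartedSpace HN N] {IN : ModelWithCorners ℝ EN HN}
  [NormedAddCommGroup F] [NormedSpace ℝ F]
  {π : M → N} {σ : N → M} {n : N}

theorem mfderiv_apply_mfderiv_of_leftInverse_s11 (hπσ : Function.LeftInverse π σ)
    (hπ : MDifferentiableAt IM IN π (σ n)) (hσ : MDifferentiableAt IN IM σ n)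
    (w : TangentSpace IN n) : mfderiv IM IN π (σ n) (mfderiv IN IM σ n w) = w := by
  rw [← ContinuousLinearMap.comp_apply, ← mfderiv_comp n hπ hσ, hπσ.comp_eq_id, mfderiv_id]
  rfl

theorem mfderiv_apply_mfderiv_of_mem_range (hπσ : Function.LeftInverse π σ)
    (hπ : MDifferentiableAt IM IN π (σ n)) (hσ : MDifferentiableAt IN IM σ n)
    {v : TangentSpace IM (σ n)} (hv : v ∈ range (mfderiv IN IM σ n)) :
    mfderiv IN IM σ n (mfderiv IM IN π (σ n) v) = v := by
  obtain ⟨w, rfl⟩ := hv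
  rw [mfderiv_apply_mfderiv_of_leftInverse_s11 hπσ hπ hσ]

theorem mfderiv_comp_eq_zero_iff {f : M → F} (hf : MDifferentiableAt IM 𝓘(ℝ, F) f (σ n))
    (hσ : MDifferentiableAt IN IM σ n) :
    mfderiv IN 𝓘(ℝ, F) (f ∘ σ) n = 0 ↔
      ∀ v ∈ range (mfderiv IN IM σ n), mfderiv IM 𝓘(ℝ, F) f (σ n) v = 0 := by
  rw [mfderiv_comp n hf hσ, forall_mem_range]
  exact ContinuousLinearMap.ext_iff

end

section

variable {V : Type*} [AddCommGroup V] [Module ℝ V] {Ξs Ξop : Module.Dual ℝ V →ₗ[ℝ] V}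

variable (Ξs) in
def IsWeaklyIsotropic (W : Set V) : Prop :=
  ∀ u ∈ W, u ∈ range Ξs → ∃ α : Module.Dual ℝ V, (∀ v ∈ W, α v = 0) ∧ Ξs α = u

theorem IsWeaklyIsotropic.apply_eq_zero_of_sharp_mem {W : Set V}
    (hweak : IsWeaklyIsotropic Ξs W) (hiso : W ⊆ range Ξop)
    (hΞ : ∀ α β : Module.Dual ℝ V, α (Ξop β) = -β (Ξs α))
    {γ : Module.Dual ℝ V} (hγ : Ξs γ ∈ W) : ∀ v ∈ W, γ v = 0 := by
  obtain ⟨α, hαW, hαγ⟩ := hweak _ hγ ⟨γ, rfl⟩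
  intro v hv
  obtain ⟨β, rfl⟩ := hiso hv
  calc γ (Ξop β) = -β (Ξs α) := by rw [hΞ, hαγ]
    _ = α (Ξop β) := (hΞ α β).symm
    _ = 0 := hαW _ hv

end

theorem existsUnique_eq_comp_snd {α β γ : Type*} [Nonempty α] {f : α × β → γ}
    (hf : ∀ a a' b, f (a, b) = f (a', b)) : ∃! h : β → γ, ∀ p, f p = h p.2 := by
  obtain ⟨a₀⟩ := ‹Nonempty α›
  exact ⟨fun b => f (a₀, b), fun p => hf _ _ _, fun h hh => funext fun b => (hh (a₀, b)).symm⟩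

theorem leibniz_complete_solution_hamiltonian_factorization_general
    {EM HM M EN HN N EL HL Λ : Type*}
    [NormedAddCommGroup EM] [NormedSpace ℝ EM] [TopologicalSpace HM]
    [TopologicalSpace M] [ChartedSpace HM M]
    [NormedAddCommGroup EN] [NormedSpace ℝ EN] [TopologicalSpace HN]
    [TopologicalSpace N] [ChartedSpace HN N]
    [NormedAddCommGroup EL] [NormedSpace ℝ EL] [TopologicalSpace HL]
    [TopologicalSpace Λ] [ChartedSpace HL Λ]
    {IM : ModelWithCorners ℝ EM HM} {IN : ModelWithCorners ℝ EN HN}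
    {IL : ModelWithCorners ℝ EL HL}
    [IsManifold IN (⊤ : ℕ∞) N]
    [IN.Boundaryless]
    -- N is connected
    [ConnectedSpace N]
    -- the fibration
    (π : M → N) (hπ : ContMDiff IM IN (⊤ : ℕ∞) π)
    -- the pointwise Leibniz structure Ξ and its musical maps Ξ♯, Ξ♯op
    (Ξ : ∀ m : M, Module.Dual ℝ (TangentSpace IM m) →ₗ[ℝ]
      Module.Dual ℝ (TangentSpace IM m) →ₗ[ℝ] ℝ)
    (Ξs Ξop : ∀ m : M, Module.Dual ℝ (TangentSpace IM m) →ₗ[ℝ] TangentSpace IM m)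
    (hΞs : ∀ (m : M) (α β : Module.Dual ℝ (TangentSpace IM m)), α (Ξs m β) = Ξ m α β)
    (hΞop : ∀ (m : M) (α β : Module.Dual ℝ (TangentSpace IM m)), α (Ξop m β) = - Ξ m β α)
    -- the Hamiltonian and its (smooth) Hamiltonian vector field X_H = Ξ♯(dH)
    (H : M → ℝ) (hH : ContMDiff IM 𝓘(ℝ, ℝ) (⊤ : ℕ∞) H)
    (XH : ∀ m : M, TangentSpace IM m)
    (hXH : ∀ m : M, XH m = Ξs m (mfderiv IM 𝓘(ℝ, ℝ) H m).toLinearMap)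
    -- S : N × Λ → M, a surjective local diffeomorphism
    (S : N × Λ → M)
    (hSdiff : IsLocalDiffeomorph (IN.prod IL) IM (⊤ : ℕ∞) S) :
    -- (1): if S is a complete solution whose partial solutions are isotropic,
    -- then H ∘ S = h ∘ p_Λ for a unique h
    (((∀ lam : Λ, (∀ n, π (S (n, lam)) = n) ∧
        ∀ n, mfderiv IN IM (fun n' => S (n', lam)) n
            (mfderiv IM IN π (S (n, lam)) (XH (S (n, lam)))) = XH (S (n, lam))) ∧
      -- each σ_lam is isotropic: weakly isotropic and Im σ_* ⊆ Im Ξ♯op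
      (∀ (lam : Λ) (n : N) (u : TangentSpace IM (S (n, lam))),
        u ∈ Set.range (mfderiv IN IM (fun n' => S (n', lam)) n) →
        u ∈ Set.range (Ξs (S (n, lam))) →
        ∃ α : Module.Dual ℝ (TangentSpace IM (S (n, lam))),
          (∀ v ∈ Set.range (mfderiv IN IM (fun n' => S (n', lam)) n), α v = 0) ∧
          Ξs (S (n, lam)) α = u) ∧
      (∀ (lam : Λ) (n : N),
        Set.range (mfderiv IN IM (fun n' => S (n', lam)) n) ⊆
          Set.range (Ξop (S (n, lam))))) →
      ∃! h : Λ → ℝ, ∀ p : N × Λ, H (S p) = h p.2) ∧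
    -- (2): if each σ_lam is Lagrangian (isotropic and co-isotropic), then S is a complete
    -- solution iff π ∘ S = p_N and H ∘ S = h ∘ p_Λ for a unique h
    (((∀ (lam : Λ) (n : N) (u : TangentSpace IM (S (n, lam))),
        u ∈ Set.range (mfderiv IN IM (fun n' => S (n', lam)) n) →
        u ∈ Set.range (Ξs (S (n, lam))) →
        ∃ α : Module.Dual ℝ (TangentSpace IM (S (n, lam))),
          (∀ v ∈ Set.range (mfderiv IN IM (fun n' => S (n', lam)) n), α v = 0) ∧
          Ξs (S (n, lam)) α = u) ∧
      (∀ (lam : Λ) (n : N),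
        Set.range (mfderiv IN IM (fun n' => S (n', lam)) n) ⊆
          Set.range (Ξop (S (n, lam)))) ∧
      (∀ (lam : Λ) (n : N) (α : Module.Dual ℝ (TangentSpace IM (S (n, lam)))),
        (∀ v ∈ Set.range (mfderiv IN IM (fun n' => S (n', lam)) n), α v = 0) →
        Ξs (S (n, lam)) α ∈ Set.range (mfderiv IN IM (fun n' => S (n', lam)) n))) →
      ((∀ lam : Λ, (∀ n, π (S (n, lam)) = n) ∧
          ∀ n, mfderiv IN IM (fun n' => S (n', lam)) n
              (mfderiv IM IN π (S (n, lam)) (XH (S (n, lam)))) = XH (S (n, lam))) ↔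
        ((∀ p : N × Λ, π (S p) = p.1) ∧ ∃! h : Λ → ℝ, ∀ p : N × Λ, H (S p) = h p.2))) := by
  have hσ : ∀ lam, MDifferentiable IN IM (fun n => S (n, lam)) := fun lam =>
    (hSdiff.contMDiff.comp (contMDiff_id.prodMk contMDiff_const)).mdifferentiable (by simp)
  have hHd : MDifferentiable IM 𝓘(ℝ, ℝ) H := hH.mdifferentiable (by simp)
  have hΞ : ∀ m (α β : Module.Dual ℝ (TangentSpace IM m)), α (Ξop m β) = -β (Ξs m α) :=
    fun m α β => by rw [hΞop, hΞs]
  have hfactor (hX : ∀ lam n, XH (S (n, lam)) ∈ range (mfderiv IN IM (fun n' => S (n', lam)) n))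
      (hweak : ∀ lam n, IsWeaklyIsotropic (Ξs (S (n, lam)))
        (range (mfderiv IN IM (fun n' => S (n', lam)) n)))
      (hiso : ∀ lam n,
        range (mfderiv IN IM (fun n' => S (n', lam)) n) ⊆ range (Ξop (S (n, lam)))) :
      ∃! h : Λ → ℝ, ∀ p : N × Λ, H (S p) = h p.2 := by
    refine existsUnique_eq_comp_snd fun n n' lam =>
      (isLocallyConstant_of_mfderiv_eq_zero (hHd.comp (hσ lam)) fun n => ?_
        ).apply_eq_of_preconnectedSpace n n'
    exact (mfderiv_comp_eq_zero_iff (hHd _) (hσ lam n)).2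
      ((hweak lam n).apply_eq_zero_of_sharp_mem (hiso lam n) (hΞ _) (hXH _ ▸ hX lam n))
  refine ⟨fun ⟨hsol, hweak, hiso⟩ => hfactor (fun lam n => ⟨_, (hsol lam).2 n⟩) hweak hiso,
    fun ⟨hweak, hiso, hcoiso⟩ => ⟨fun hsol => ⟨fun p => (hsol p.2).1 p.1,
      hfactor (fun lam n => ⟨_, (hsol lam).2 n⟩) hweak hiso⟩, ?_⟩⟩
  rintro ⟨hπS, h, hh, -⟩ lam
  have hsec : Function.LeftInverse π (fun n => S (n, lam)) := fun n => hπS (n, lam)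
  refine ⟨hsec, fun n => mfderiv_apply_mfderiv_of_mem_range hsec
    (hπ.mdifferentiableAt (by simp)) (hσ lam n) ?_⟩
  have hconst : mfderiv IN 𝓘(ℝ, ℝ) (H ∘ fun n' => S (n', lam)) n = 0 := by
    rw [show H ∘ (fun n' => S (n', lam)) = fun _ => h lam from funext fun n' => hh (n', lam)]
    exact mfderiv_const
  rw [hXH]
  exact hcoiso lam n _ ((mfderiv_comp_eq_zero_iff (hHd _) (hσ lam n)).1 hconst)

/-- On a Leibniz manifold, with `N` connected: (1) an isotropic complete solution `S` of the
`π`-Hamilton–Jacobi equation for `(M, X_H)` factors the Hamiltonian as `H ∘ S = h ∘ p_Λ` for a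
unique `h : Λ → ℝ`;  (2) if each `σ_λ` is Lagrangian, a surjective local diffeomorphism `S` is
a complete solution iff `π ∘ S = p_N` and `H ∘ S = h ∘ p_Λ` for a unique `h : Λ → ℝ`. -/
theorem leibniz_complete_solution_hamiltonian_factorization
    {EM HM M EN HN N EL HL Λ : Type*}
    [NormedAddCommGroup EM] [NormedSpace ℝ EM] [TopologicalSpace HM]
    [TopologicalSpace M] [ChartedSpace HM M]
    [NormedAddCommGroup EN] [NormedSpace ℝ EN] [TopologicalSpace HN]
    [TopologicalSpace N] [ChartedSpace HN N]
    [NormedAddCommGroup EL] [NormedSpace ℝ EL] [TopologicalSpace HL]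
    [TopologicalSpace Λ] [ChartedSpace HL Λ]
    {IM : ModelWithCorners ℝ EM HM} {IN : ModelWithCorners ℝ EN HN}
    {IL : ModelWithCorners ℝ EL HL}
    [IsManifold IM (⊤ : ℕ∞) M] [IsManifold IN (⊤ : ℕ∞) N]
    [IsManifold IL (⊤ : ℕ∞) Λ]
    [FiniteDimensional ℝ EM] [FiniteDimensional ℝ EN] [FiniteDimensional ℝ EL]
    [IM.Boundaryless] [IN.Boundaryless] [IL.Boundaryless]
    -- N is connected
    [ConnectedSpace N]
    -- dim Λ = dim M - dim N
    (hdim : Module.finrank ℝ EL = Module.finrank ℝ EM - Module.finrank ℝ EN)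
    -- the fibration
    (π : M → N) (hπ : ContMDiff IM IN (⊤ : ℕ∞) π)
    (hπsurj : Function.Surjective π)
    (hπsub : ∀ m, Function.Surjective (mfderiv IM IN π m))
    -- the pointwise Leibniz structure Ξ and its musical maps Ξ♯, Ξ♯op
    (Ξ : ∀ m : M, Module.Dual ℝ (TangentSpace IM m) →ₗ[ℝ]
      Module.Dual ℝ (TangentSpace IM m) →ₗ[ℝ] ℝ)
    (Ξs Ξop : ∀ m : M, Module.Dual ℝ (TangentSpace IM m) →ₗ[ℝ] TangentSpace IM m)
    (hΞs : ∀ (m : M) (α β : Module.Dual ℝ (TangentSpace IM m)), α (Ξs m β) = Ξ m α β)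
    (hΞop : ∀ (m : M) (α β : Module.Dual ℝ (TangentSpace IM m)), α (Ξop m β) = - Ξ m β α)
    -- the Hamiltonian and its (smooth) Hamiltonian vector field X_H = Ξ♯(dH)
    (H : M → ℝ) (hH : ContMDiff IM 𝓘(ℝ, ℝ) (⊤ : ℕ∞) H)
    (XH : ∀ m : M, TangentSpace IM m)
    (hXHsmooth : ContMDiff IM IM.tangent (⊤ : ℕ∞) (fun m => (⟨m, XH m⟩ : TangentBundle IM M)))
    (hXH : ∀ m : M, XH m = Ξs m (mfderiv IM 𝓘(ℝ, ℝ) H m).toLinearMap)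
    -- S : N × Λ → M, a surjective local diffeomorphism
    (S : N × Λ → M)
    (hSsurj : Function.Surjective S)
    (hSdiff : IsLocalDiffeomorph (IN.prod IL) IM (⊤ : ℕ∞) S) :
    -- (1): if S is a complete solution whose partial solutions are isotropic,
    -- then H ∘ S = h ∘ p_Λ for a unique h
    (((∀ lam : Λ, (∀ n, π (S (n, lam)) = n) ∧
        ∀ n, mfderiv IN IM (fun n' => S (n', lam)) n
            (mfderiv IM IN π (S (n, lam)) (XH (S (n, lam)))) = XH (S (n, lam))) ∧
      -- each σ_lam is isotropic: weakly isotropic and Im σ_* ⊆ Im Ξ♯op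
      (∀ (lam : Λ) (n : N) (u : TangentSpace IM (S (n, lam))),
        u ∈ Set.range (mfderiv IN IM (fun n' => S (n', lam)) n) →
        u ∈ Set.range (Ξs (S (n, lam))) →
        ∃ α : Module.Dual ℝ (TangentSpace IM (S (n, lam))),
          (∀ v ∈ Set.range (mfderiv IN IM (fun n' => S (n', lam)) n), α v = 0) ∧
          Ξs (S (n, lam)) α = u) ∧
      (∀ (lam : Λ) (n : N),
        Set.range (mfderiv IN IM (fun n' => S (n', lam)) n) ⊆
          Set.range (Ξop (S (n, lam))))) →
      ∃! h : Λ → ℝ, ∀ p : N × Λ, H (S p) = h p.2) ∧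
    -- (2): if each σ_lam is Lagrangian (isotropic and co-isotropic), then S is a complete
    -- solution iff π ∘ S = p_N and H ∘ S = h ∘ p_Λ for a unique h
    (((∀ (lam : Λ) (n : N) (u : TangentSpace IM (S (n, lam))),
        u ∈ Set.range (mfderiv IN IM (fun n' => S (n', lam)) n) →
        u ∈ Set.range (Ξs (S (n, lam))) →
        ∃ α : Module.Dual ℝ (TangentSpace IM (S (n, lam))),
          (∀ v ∈ Set.range (mfderiv IN IM (fun n' => S (n', lam)) n), α v = 0) ∧
          Ξs (S (n, lam)) α = u) ∧
      (∀ (lam : Λ) (n : N),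
        Set.range (mfderiv IN IM (fun n' => S (n', lam)) n) ⊆
          Set.range (Ξop (S (n, lam)))) ∧
      (∀ (lam : Λ) (n : N) (α : Module.Dual ℝ (TangentSpace IM (S (n, lam)))),
        (∀ v ∈ Set.range (mfderiv IN IM (fun n' => S (n', lam)) n), α v = 0) →
        Ξs (S (n, lam)) α ∈ Set.range (mfderiv IN IM (fun n' => S (n', lam)) n))) →
      ((∀ lam : Λ, (∀ n, π (S (n, lam)) = n) ∧
          ∀ n, mfderiv IN IM (fun n' => S (n', lam)) n
              (mfderiv IM IN π (S (n, lam)) (XH (S (n, lam)))) = XH (S (n, lam))) ↔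
        ((∀ p : N × Λ, π (S p) = p.1) ∧ ∃! h : Λ → ℝ, ∀ p : N × Λ, H (S p) = h p.2))) :=
  leibniz_complete_solution_hamiltonian_factorization_general π hπ Ξ Ξs Ξop hΞs hΞop H hH XH hXH S
    hSdiff
end
end

section
/- A surjective local diffeomorphism Σ : N × Λ → M is a complete solution of the Π-HJE for (M, X_H) if and only if Π ∘ Σ = p_N and d(H∘Σ) = i_{X_H^Σ} Σ*ω, i.e. for all (n,λ) ∈ N × Λ and all v ∈ T_{(n,λ)}(N × Λ): d(H∘Σ)_{(n,λ)}(v) = ω_{Σ(n,λ)}(Σ_{*,(n,λ)}(X_H^Σ(n,λ)), Σ_{*,(n,λ)}(v)), where X_H^Σ(n,λ) := (Π_{*,Σ(n,λ)}(X_H(Σ(n,λ))), 0). Moreover, in that case, for every λ ∈ Λ the partial solution σ_λ := Σ(·,λ) satisfies d(H∘σ_λ)_n(y) = ω_{σ_λ(n)}((σ_λ)_{*,n}(X_H^{σ_λ}(n)), (σ_λ)_{*,n}(y)) for all n ∈ N and y ∈ T_nN, with X_H^{σ_λ}(n) := Π_{*,σ_λ(n)}(X_H(σ_λ(n))). -/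
/-!
Because `X_H` is `ω`-dual to `dH`, for any map `f` into `M` one has
`d(H ∘ f) v = ω(X_H, df v)`. So `d(H ∘ S) = i_{X_H^S} S*ω` says that `ω(dS X_H^S - X_H, ·)`
vanishes on the image of `dS`, which is the whole tangent space since `S` is a local
diffeomorphism; by nondegeneracy this is `dS X_H^S = X_H`. As `dS (ξ, 0) = dσ_λ ξ`, that is the
`Π`-HJE for every `σ_λ`. The identity for the partial solutions needs only the first observation.
-/

open Manifold

theorem LinearMap.SeparatingLeft.eq_of_forall_apply_eq_of_surjective
    {R V W ι : Type*} [CommRing R] [AddCommGroup V] [Module R V] [AddCommGroup W] [Module R W]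
    {B : V →ₗ[R] W →ₗ[R] R} (hB : B.SeparatingLeft) {f : ι → W} (hf : Function.Surjective f)
    {a b : V} (h : ∀ i, B a (f i) = B b (f i)) : a = b := by
  refine sub_eq_zero.mp (hB _ fun w => ?_)
  obtain ⟨i, rfl⟩ := hf w
  rw [map_sub, LinearMap.sub_apply, h, sub_self]

section Manifold

variable {𝕜 : Type*} [NontriviallyNormedField 𝕜]
  {E : Type*} [NormedAddCommGroup E] [NormedSpace 𝕜 E] {H : Type*} [TopologicalSpace H]
  {I : ModelWithCorners 𝕜 E H} {M : Type*} [TopologicalSpace M] [ChartedSpace H M]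
  {E' : Type*} [NormedAddCommGroup E'] [NormedSpace 𝕜 E'] {H' : Type*} [TopologicalSpace H']
  {I' : ModelWithCorners 𝕜 E' H'} {M' : Type*} [TopologicalSpace M'] [ChartedSpace H' M']
  {F : Type*} [NormedAddCommGroup F] [NormedSpace 𝕜 F] {G : Type*} [TopologicalSpace G]
  {J : ModelWithCorners 𝕜 F G} {N : Type*} [TopologicalSpace N] [ChartedSpace G N]

theorem mfderiv_comp_prod_left_apply {f : M × M' → N} {p : M × M'}
    (hf : MDifferentiableAt (I.prod I') J f p) (u : TangentSpace I p.1) :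
    mfderiv I J (fun x => f (x, p.2)) p.1 u =
      mfderiv (I.prod I') J f p ((u, 0) : TangentSpace I p.1 × TangentSpace I' p.2) := by
  have := mfderiv_comp_apply (f := fun x => (x, p.2)) p.1 hf
    (mdifferentiableAt_id.prodMk mdifferentiableAt_const) u
  rwa [mfderiv_prod_left] at this

def IsHamiltonianVectorField (ω : ∀ m : M, TangentSpace I m →ₗ[𝕜] TangentSpace I m →ₗ[𝕜] 𝕜)
    (Ham : M → 𝕜) (X : ∀ m : M, TangentSpace I m) : Prop :=
  ∀ m v, ω m (X m) v = mfderiv I 𝓘(𝕜, 𝕜) Ham m v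

variable {ω : ∀ m : M, TangentSpace I m →ₗ[𝕜] TangentSpace I m →ₗ[𝕜] 𝕜} {Ham : M → 𝕜}
  {X : ∀ m : M, TangentSpace I m} {f : N → M} {x : N}

theorem IsHamiltonianVectorField.mfderiv_comp_apply_eq (hX : IsHamiltonianVectorField ω Ham X)
    (hf : MDifferentiableAt J I f x) (hHam : MDifferentiableAt I 𝓘(𝕜, 𝕜) Ham (f x))
    {ξ : TangentSpace J x} (hξ : mfderiv J I f x ξ = X (f x)) (v : TangentSpace J x) :
    mfderiv J 𝓘(𝕜, 𝕜) (Ham ∘ f) x v = ω (f x) (mfderiv J I f x ξ) (mfderiv J I f x v) := by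
  rw [hξ, hX, mfderiv_comp_apply x hHam hf]

theorem IsHamiltonianVectorField.mfderiv_eq_iff (hX : IsHamiltonianVectorField ω Ham X)
    (hω : (ω (f x)).SeparatingLeft) (hf : MDifferentiableAt J I f x)
    (hdf : Function.Surjective (mfderiv J I f x))
    (hHam : MDifferentiableAt I 𝓘(𝕜, 𝕜) Ham (f x)) (ξ : TangentSpace J x) :
    mfderiv J I f x ξ = X (f x) ↔ ∀ v, mfderiv J 𝓘(𝕜, 𝕜) (Ham ∘ f) x v =
      ω (f x) (mfderiv J I f x ξ) (mfderiv J I f x v) := by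
  refine ⟨hX.mfderiv_comp_apply_eq hf hHam, fun h => ?_⟩
  refine hω.eq_of_forall_apply_eq_of_surjective hdf fun v => ?_
  rw [← h, hX, mfderiv_comp_apply x hHam hf]

end Manifold

theorem symplectic_complete_solution_iff_contraction_general
    {EM HM M EN HN N EL HL Λ : Type*}
    [NormedAddCommGroup EM] [NormedSpace ℝ EM] [TopologicalSpace HM]
    [TopologicalSpace M] [ChartedSpace HM M]
    [NormedAddCommGroup EN] [NormedSpace ℝ EN] [TopologicalSpace HN]
    [TopologicalSpace N] [ChartedSpace HN N]
    [NormedAddCommGroup EL] [NormedSpace ℝ EL] [TopologicalSpace HL]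
    [TopologicalSpace Λ] [ChartedSpace HL Λ]
    {IM : ModelWithCorners ℝ EM HM} {IN : ModelWithCorners ℝ EN HN}
    {IL : ModelWithCorners ℝ EL HL}
    -- the fibration
    (π : M → N)
    -- the pointwise nondegenerate alternating bilinear form ω
    (ω : ∀ m : M, TangentSpace IM m →ₗ[ℝ] TangentSpace IM m →ₗ[ℝ] ℝ)
    (hωnd : ∀ (m : M) (v : TangentSpace IM m), (∀ w, ω m v w = 0) → v = 0)
    -- the Hamiltonian and its (smooth) Hamiltonian vector field
    (H : M → ℝ) (hH : ContMDiff IM 𝓘(ℝ, ℝ) (⊤ : ℕ∞) H)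
    (XH : ∀ m : M, TangentSpace IM m)
    (hXH : ∀ (m : M) (v : TangentSpace IM m), ω m (XH m) v = mfderiv IM 𝓘(ℝ, ℝ) H m v)
    -- S : N × Λ → M, a surjective local diffeomorphism
    (S : N × Λ → M)
    (hSdiff : IsLocalDiffeomorph (IN.prod IL) IM (⊤ : ℕ∞) S) :
    -- S is a complete solution iff π ∘ S = p_N and d(H∘S) = i_{X_H^S} S*ω ...
    ((∀ lam : Λ, (∀ n, π (S (n, lam)) = n) ∧
        ∀ n, mfderiv IN IM (fun n' => S (n', lam)) n
            (mfderiv IM IN π (S (n, lam)) (XH (S (n, lam)))) = XH (S (n, lam))) ↔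
      ((∀ p : N × Λ, π (S p) = p.1) ∧
        ∀ (p : N × Λ) (v : TangentSpace (IN.prod IL) p),
          mfderiv (IN.prod IL) 𝓘(ℝ, ℝ) (H ∘ S) p v =
            ω (S p)
              (mfderiv (IN.prod IL) IM S p
                ((mfderiv IM IN π (S p) (XH (S p)), 0) :
                  TangentSpace IN p.1 × TangentSpace IL p.2))
              (mfderiv (IN.prod IL) IM S p v))) ∧
    -- ... and in that case every partial solution satisfies d(H∘σ_λ) = i_{X_H^{σ_λ}} σ_λ*ω
    ((∀ lam : Λ, (∀ n, π (S (n, lam)) = n) ∧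
        ∀ n, mfderiv IN IM (fun n' => S (n', lam)) n
            (mfderiv IM IN π (S (n, lam)) (XH (S (n, lam)))) = XH (S (n, lam))) →
      ∀ (lam : Λ) (n : N) (y : TangentSpace IN n),
        mfderiv IN 𝓘(ℝ, ℝ) (H ∘ fun n' => S (n', lam)) n y =
          ω (S (n, lam))
            (mfderiv IN IM (fun n' => S (n', lam)) n
              (mfderiv IM IN π (S (n, lam)) (XH (S (n, lam)))))
            (mfderiv IN IM (fun n' => S (n', lam)) n y)) := by
  have hSmd : MDifferentiable (IN.prod IL) IM S := hSdiff.mdifferentiable (by simp)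
  have hHmd : MDifferentiable IM 𝓘(ℝ, ℝ) H := hH.mdifferentiable (by simp)
  have hσ : ∀ lam n, MDifferentiableAt IN IM (fun n' => S (n', lam)) n := fun lam n =>
    (hSmd (n, lam)).comp n (mdifferentiableAt_id.prodMk mdifferentiableAt_const)
  have hX : IsHamiltonianVectorField ω H XH := hXH
  have hS := fun p : N × Λ => hX.mfderiv_eq_iff
    (hωnd (S p)) (hSmd p) ((hSdiff p).mfderivToContinuousLinearEquiv (by simp)).surjective
    (hHmd (S p))
  refine ⟨?_, fun h lam n => hX.mfderiv_comp_apply_eq (hσ lam n) (hHmd _) ((h lam).2 n)⟩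
  simp only [forall_and, Prod.forall]
  refine and_congr forall_comm (forall_comm.trans (forall₂_congr fun n lam => ?_))
  exact (Eq.congr_left (mfderiv_comp_prod_left_apply (hSmd (n, lam)) _)).trans (hS (n, lam) _)

/-- On a symplectic manifold, a surjective local diffeomorphism `S : N × Λ → M` is a complete
solution of the `π`-Hamilton–Jacobi equation for `(M, X_H)` iff `π ∘ S = p_N` and
`d(H∘S) = i_{X_H^S} S*ω`; and in that case each partial solution `σ_λ` satisfies
`d(H∘σ_λ) = i_{X_H^{σ_λ}} σ_λ*ω`. -/
theorem symplectic_complete_solution_iff_contraction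
    {EM HM M EN HN N EL HL Λ : Type*}
    [NormedAddCommGroup EM] [NormedSpace ℝ EM] [TopologicalSpace HM]
    [TopologicalSpace M] [ChartedSpace HM M]
    [NormedAddCommGroup EN] [NormedSpace ℝ EN] [TopologicalSpace HN]
    [TopologicalSpace N] [ChartedSpace HN N]
    [NormedAddCommGroup EL] [NormedSpace ℝ EL] [TopologicalSpace HL]
    [TopologicalSpace Λ] [ChartedSpace HL Λ]
    {IM : ModelWithCorners ℝ EM HM} {IN : ModelWithCorners ℝ EN HN}
    {IL : ModelWithCorners ℝ EL HL}
    [IsManifold IM (⊤ : ℕ∞) M] [IsManifold IN (⊤ : ℕ∞) N]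
    [IsManifold IL (⊤ : ℕ∞) Λ]
    [FiniteDimensional ℝ EM] [FiniteDimensional ℝ EN] [FiniteDimensional ℝ EL]
    [IM.Boundaryless] [IN.Boundaryless] [IL.Boundaryless]
    -- dim Λ = dim M - dim N
    (hdim : Module.finrank ℝ EL = Module.finrank ℝ EM - Module.finrank ℝ EN)
    -- the fibration
    (π : M → N) (hπ : ContMDiff IM IN (⊤ : ℕ∞) π)
    (hπsurj : Function.Surjective π)
    (hπsub : ∀ m, Function.Surjective (mfderiv IM IN π m))
    -- the pointwise nondegenerate alternating bilinear form ω
    (ω : ∀ m : M, TangentSpace IM m →ₗ[ℝ] TangentSpace IM m →ₗ[ℝ] ℝ)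
    (hωalt : ∀ (m : M) (v : TangentSpace IM m), ω m v v = 0)
    (hωnd : ∀ (m : M) (v : TangentSpace IM m), (∀ w, ω m v w = 0) → v = 0)
    -- the Hamiltonian and its (smooth) Hamiltonian vector field
    (H : M → ℝ) (hH : ContMDiff IM 𝓘(ℝ, ℝ) (⊤ : ℕ∞) H)
    (XH : ∀ m : M, TangentSpace IM m)
    (hXHsmooth : ContMDiff IM IM.tangent (⊤ : ℕ∞) (fun m => (⟨m, XH m⟩ : TangentBundle IM M)))
    (hXH : ∀ (m : M) (v : TangentSpace IM m), ω m (XH m) v = mfderiv IM 𝓘(ℝ, ℝ) H m v)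
    -- S : N × Λ → M, a surjective local diffeomorphism
    (S : N × Λ → M)
    (hSsurj : Function.Surjective S)
    (hSdiff : IsLocalDiffeomorph (IN.prod IL) IM (⊤ : ℕ∞) S) :
    -- S is a complete solution iff π ∘ S = p_N and d(H∘S) = i_{X_H^S} S*ω ...
    ((∀ lam : Λ, (∀ n, π (S (n, lam)) = n) ∧
        ∀ n, mfderiv IN IM (fun n' => S (n', lam)) n
            (mfderiv IM IN π (S (n, lam)) (XH (S (n, lam)))) = XH (S (n, lam))) ↔
      ((∀ p : N × Λ, π (S p) = p.1) ∧
        ∀ (p : N × Λ) (v : TangentSpace (IN.prod IL) p),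
          mfderiv (IN.prod IL) 𝓘(ℝ, ℝ) (H ∘ S) p v =
            ω (S p)
              (mfderiv (IN.prod IL) IM S p
                ((mfderiv IM IN π (S p) (XH (S p)), 0) :
                  TangentSpace IN p.1 × TangentSpace IL p.2))
              (mfderiv (IN.prod IL) IM S p v))) ∧
    -- ... and in that case every partial solution satisfies d(H∘σ_λ) = i_{X_H^{σ_λ}} σ_λ*ω
    ((∀ lam : Λ, (∀ n, π (S (n, lam)) = n) ∧
        ∀ n, mfderiv IN IM (fun n' => S (n', lam)) n
            (mfderiv IM IN π (S (n, lam)) (XH (S (n, lam)))) = XH (S (n, lam))) →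
      ∀ (lam : Λ) (n : N) (y : TangentSpace IN n),
        mfderiv IN 𝓘(ℝ, ℝ) (H ∘ fun n' => S (n', lam)) n y =
          ω (S (n, lam))
            (mfderiv IN IM (fun n' => S (n', lam)) n
              (mfderiv IM IN π (S (n, lam)) (XH (S (n, lam)))))
            (mfderiv IN IM (fun n' => S (n', lam)) n y)) :=
  symplectic_complete_solution_iff_contraction_general π ω hωnd H hH XH hXH S hSdiff
end

section
/- Let Σ : N × Λ → M be a complete solution of the Π-HJE for (M,X). Then for every m ∈ M there exist an open neighborhood U ⊆ M of m and a smooth submersion F : U → Λ with F(U) ⊆ Λ open, such that: (i) X(u) ∈ Ker F_{*,u} for every u ∈ U; (ii) F is transverse to Π|_U, i.e. T_uU = Ker Π_{*,u} ⊕ Ker F_{*,u} for every u ∈ U; (iii) Σ(Π(U) × F(U)) ⊆ U; (iv) the restriction of Σ to Π(U) × F(U) is a diffeomorphism onto U; and (v) F(Σ(n,λ)) = λ for all (n,λ) ∈ Π(U) × F(U). -/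
open Set

/-! Near `S p₀`, a local inverse of `S` restricted to a product box `V × W` is a chart
`u ↦ (π u, F u)` of `M`; its second component `F` is the momentum map. The identities
`π ∘ S = fst` and `F ∘ S = snd` say that, after the isomorphism `dS`, the differentials `dπ` and
`dF` become the two coordinate projections, so their kernels are complementary and `dF` is onto.
Finally `F` is constant along each section `σ_λ = S (·, λ)`, and the Hamilton–Jacobi equation
`X = dσ_λ (dπ X)` says that `X` is tangent to these sections, so `dF X = 0`. -/

theorem LinearMap.isCompl_ker_of_comp_eq_fst_of_comp_eq_snd {R V E₁ E₂ : Type*} [Semiring R]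
    [AddCommMonoid V] [AddCommMonoid E₁] [AddCommMonoid E₂] [Module R V] [Module R E₁]
    [Module R E₂] (e : (E₁ × E₂) ≃ₗ[R] V) {A : V →ₗ[R] E₁} {B : V →ₗ[R] E₂}
    (hA : A ∘ₗ e = fst R E₁ E₂) (hB : B ∘ₗ e = snd R E₁ E₂) : IsCompl (ker A) (ker B) := by
  have h : IsCompl ((ker A).comap (e : E₁ × E₂ →ₗ[R] V)) ((ker B).comap (e : E₁ × E₂ →ₗ[R] V)) := by
    rw [← ker_comp, ← ker_comp, hA, hB, ker_fst, ker_snd]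
    exact isCompl_range_inl_inr.symm
  rw [← Submodule.orderIsoMapComap_symm_apply, ← Submodule.orderIsoMapComap_symm_apply] at h
  exact (Submodule.orderIsoMapComap e).symm.isCompl_iff.mpr h

section
variable {α β γ : Type*} {S : α × β → γ} {s : Set α} {t : Set β}

theorem Set.image_image_prod_eq_left {g : γ → α} (ht : t.Nonempty)
    (h : ∀ q ∈ s ×ˢ t, g (S q) = q.1) : g '' (S '' (s ×ˢ t)) = s := by
  rw [image_image, image_congr h, fst_image_prod s ht]

theorem Set.image_image_prod_eq_right {g : γ → β} (hs : s.Nonempty)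
    (h : ∀ q ∈ s ×ˢ t, g (S q) = q.2) : g '' (S '' (s ×ˢ t)) = t := by
  rw [image_image, image_congr h, snd_image_prod hs t]
end

section
variable {𝕜 : Type*} [NontriviallyNormedField 𝕜]
  {E H M : Type*} [NormedAddCommGroup E] [NormedSpace 𝕜 E] [TopologicalSpace H]
  [TopologicalSpace M] [ChartedSpace H M] {I : ModelWithCorners 𝕜 E H}
  {E' H' M' : Type*} [NormedAddCommGroup E'] [NormedSpace 𝕜 E'] [TopologicalSpace H']
  [TopologicalSpace M'] [ChartedSpace H' M'] {I' : ModelWithCorners 𝕜 E' H'}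
  {E'' H'' M'' : Type*} [NormedAddCommGroup E''] [NormedSpace 𝕜 E''] [TopologicalSpace H'']
  [TopologicalSpace M''] [ChartedSpace H'' M''] {I'' : ModelWithCorners 𝕜 E'' H''}

theorem mfderiv_comp_mfderiv_of_eventuallyEq {f : M → M'} {g : M' → M''} {h : M → M''} {x : M}
    (hg : MDifferentiableAt I' I'' g (f x)) (hf : MDifferentiableAt I I' f x)
    (hgf : g ∘ f =ᶠ[nhds x] h) :
    (mfderiv I' I'' g (f x)).comp (mfderiv I I' f x) = mfderiv I I'' h x := by
  rw [← mfderiv_comp x hg hf, hgf.mfderiv_eq]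

end

section
variable {𝕜 : Type*} [NontriviallyNormedField 𝕜]
  {EM HM M : Type*} [NormedAddCommGroup EM] [NormedSpace 𝕜 EM] [TopologicalSpace HM]
  [TopologicalSpace M] [ChartedSpace HM M] {IM : ModelWithCorners 𝕜 EM HM}
  {EN HN N : Type*} [NormedAddCommGroup EN] [NormedSpace 𝕜 EN] [TopologicalSpace HN]
  [TopologicalSpace N] [ChartedSpace HN N] {IN : ModelWithCorners 𝕜 EN HN}
  {EL HL Λ : Type*} [NormedAddCommGroup EL] [NormedSpace 𝕜 EL] [TopologicalSpace HL]
  [TopologicalSpace Λ] [ChartedSpace HL Λ] {IL : ModelWithCorners 𝕜 EL HL}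
  {S : N × Λ → M} {π : M → N} {F : M → Λ}

theorem surjective_mfderiv_of_comp_eventuallyEq_snd {q : N × Λ}
    (hF : MDifferentiableAt IM IL F (S q)) (hS : MDifferentiableAt (IN.prod IL) IM S q)
    (hFS : F ∘ S =ᶠ[nhds q] Prod.snd) : Function.Surjective (mfderiv IM IL F (S q)) := by
  have h := mfderiv_comp_mfderiv_of_eventuallyEq hF hS hFS
  rw [mfderiv_snd] at h
  exact fun w => ⟨_, DFunLike.congr_fun h (0, w)⟩

theorem mfderiv_apply_mfderiv_slice_eq_zero {n : N} {lam : Λ}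
    (hF : MDifferentiableAt IM IL F (S (n, lam)))
    (hS : MDifferentiableAt (IN.prod IL) IM S (n, lam))
    (hFS : F ∘ S =ᶠ[nhds (n, lam)] Prod.snd) (v : TangentSpace IN n) :
    mfderiv IM IL F (S (n, lam)) (mfderiv IN IM (fun n' => S (n', lam)) n v) = 0 := by
  have hconst : F ∘ (fun n' => S (n', lam)) =ᶠ[nhds n] fun _ => lam :=
    hFS.comp_tendsto ((continuous_id.prodMk continuous_const).tendsto n)
  have hσ : MDifferentiableAt IN IM (fun n' => S (n', lam)) n :=
    hS.comp n (mdifferentiableAt_id.prodMk mdifferentiableAt_const)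
  have h := mfderiv_comp_mfderiv_of_eventuallyEq (f := fun n' => S (n', lam)) hF hσ hconst
  rw [mfderiv_const] at h
  exact DFunLike.congr_fun h v

theorem isCompl_ker_mfderiv_of_comp_eventuallyEq_fst_snd {n : WithTop ℕ∞} {q : N × Λ}
    (hS : IsLocalDiffeomorphAt (IN.prod IL) IM n S q) (hn : n ≠ 0)
    (hπ : MDifferentiableAt IM IN π (S q)) (hF : MDifferentiableAt IM IL F (S q))
    (hπS : π ∘ S =ᶠ[nhds q] Prod.fst) (hFS : F ∘ S =ᶠ[nhds q] Prod.snd) :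
    IsCompl
      (LinearMap.ker
        (mfderiv IM IN π (S q) : TangentSpace IM (S q) →ₗ[𝕜] TangentSpace IN (π (S q))))
      (LinearMap.ker
        (mfderiv IM IL F (S q) : TangentSpace IM (S q) →ₗ[𝕜] TangentSpace IL (F (S q)))) := by
  have hA := mfderiv_comp_mfderiv_of_eventuallyEq hπ (hS.mdifferentiableAt hn) hπS
  have hB := mfderiv_comp_mfderiv_of_eventuallyEq hF (hS.mdifferentiableAt hn) hFS
  rw [mfderiv_fst] at hA
  rw [mfderiv_snd] at hB
  exact LinearMap.isCompl_ker_of_comp_eq_fst_of_comp_eq_snd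
    (hS.mfderivToContinuousLinearEquiv hn).toLinearEquiv
    (congrArg ContinuousLinearMap.toLinearMap hA) (congrArg ContinuousLinearMap.toLinearMap hB)

theorem IsLocalDiffeomorphAt.exists_prod_nhds_comp_eventuallyEq_snd {n : WithTop ℕ∞} {p : N × Λ}
    (hS : IsLocalDiffeomorphAt (IN.prod IL) IM n S p) :
    ∃ (V : Set N) (W : Set Λ) (F : M → Λ), IsOpen W ∧ p.1 ∈ V ∧ p.2 ∈ W ∧
      IsOpen (S '' (V ×ˢ W)) ∧ ContMDiffOn IM IL n F (S '' (V ×ˢ W)) ∧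
      ∀ q ∈ V ×ˢ W, F ∘ S =ᶠ[nhds q] Prod.snd := by
  obtain ⟨Φ, hp, hSΦ⟩ := hS
  obtain ⟨V, W, hV, hW, hpV, hpW, hVW⟩ := isOpen_prod_iff.mp Φ.open_source p.1 p.2 hp
  have hU : S '' (V ×ˢ W) = Φ '' (V ×ˢ W) := image_congr fun q hq => hSΦ (hVW hq)
  refine ⟨V, W, fun u => (Φ.symm u).2, hW, hpV, hpW, ?_, ?_, fun q hq => ?_⟩
  · rw [hU]
    exact Φ.toOpenPartialHomeomorph.isOpen_image_of_subset_source (hV.prod hW) hVW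
  · rw [hU]
    exact (contMDiff_snd.comp_contMDiffOn Φ.symm.contMDiffOn).mono
      (Φ.toPartialEquiv.mapsTo.mono_left hVW).image_subset
  · filter_upwards [Φ.open_source.mem_nhds (hVW hq)] with q' hq'
    simp [hSΦ hq', Φ.toPartialEquiv.left_inv hq']

end

theorem local_momentum_map_from_complete_solution_general
    {EM HM M EN HN N EL HL Λ : Type*}
    [NormedAddCommGroup EM] [NormedSpace ℝ EM] [TopologicalSpace HM]
    [TopologicalSpace M] [ChartedSpace HM M]
    [NormedAddCommGroup EN] [NormedSpace ℝ EN] [TopologicalSpace HN]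
    [TopologicalSpace N] [ChartedSpace HN N]
    [NormedAddCommGroup EL] [NormedSpace ℝ EL] [TopologicalSpace HL]
    [TopologicalSpace Λ] [ChartedSpace HL Λ]
    {IM : ModelWithCorners ℝ EM HM} {IN : ModelWithCorners ℝ EN HN}
    {IL : ModelWithCorners ℝ EL HL}
    -- the fibration
    (π : M → N) (hπ : ContMDiff IM IN (⊤ : ℕ∞) π)
    -- the (smooth) vector field X
    (X : ∀ m : M, TangentSpace IM m)
    -- S : N × Λ → M, a complete solution of the π-HJE for (M, X)
    (S : N × Λ → M)
    (hSsurj : Function.Surjective S)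
    (hSdiff : IsLocalDiffeomorph (IN.prod IL) IM (⊤ : ℕ∞) S)
    (hSsol : ∀ lam : Λ, (∀ n, π (S (n, lam)) = n) ∧
      ∀ n, mfderiv IN IM (fun n' => S (n', lam)) n
          (mfderiv IM IN π (S (n, lam)) (X (S (n, lam)))) = X (S (n, lam))) :
    ∀ m : M, ∃ (U : Set M) (F : M → Λ),
      IsOpen U ∧ m ∈ U ∧
      -- F is a smooth submersion on U with open image
      ContMDiffOn IM IL (⊤ : ℕ∞) F U ∧
      IsOpen (F '' U) ∧
      (∀ u ∈ U, Function.Surjective (mfderiv IM IL F u)) ∧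
      -- (i) X lies in the kernel of F_*
      (∀ u ∈ U, X u ∈
        LinearMap.ker (mfderiv IM IL F u : TangentSpace IM u →ₗ[ℝ] TangentSpace IL (F u))) ∧
      -- (ii) F is transverse to π on U
      (∀ u ∈ U,
        LinearMap.ker (mfderiv IM IN π u : TangentSpace IM u →ₗ[ℝ] TangentSpace IN (π u)) ⊓
          LinearMap.ker (mfderiv IM IL F u : TangentSpace IM u →ₗ[ℝ] TangentSpace IL (F u)) = ⊥ ∧
        LinearMap.ker (mfderiv IM IN π u : TangentSpace IM u →ₗ[ℝ] TangentSpace IN (π u)) ⊔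
          LinearMap.ker (mfderiv IM IL F u : TangentSpace IM u →ₗ[ℝ] TangentSpace IL (F u)) = ⊤) ∧
      -- (iii) S maps π(U) × F(U) into U
      Set.MapsTo S ((π '' U) ×ˢ (F '' U)) U ∧
      -- (iv) S restricted to π(U) × F(U) is a diffeomorphism onto U
      Set.BijOn S ((π '' U) ×ˢ (F '' U)) U ∧
      -- (v) F ∘ S = p_Λ on π(U) × F(U)
      (∀ p ∈ (π '' U) ×ˢ (F '' U), F (S p) = p.2) := by
  intro m
  have hn : ((⊤ : ℕ∞) : WithTop ℕ∞) ≠ 0 := by simp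
  obtain ⟨p₀, rfl⟩ := hSsurj m
  obtain ⟨V, W, F, hW, hn₀, hl₀, hU, hF, hFS⟩ :=
    (hSdiff p₀).exists_prod_nhds_comp_eventuallyEq_snd
  have hπS : π ∘ S = Prod.fst := funext fun q => (hSsol q.2).1 q.1
  have hFSq : ∀ q ∈ V ×ˢ W, F (S q) = q.2 := fun q hq => (hFS q hq).eq_of_nhds
  have hFd : ∀ q ∈ V ×ˢ W, MDifferentiableAt IM IL F (S q) := fun q hq =>
    (hF.contMDiffAt (hU.mem_nhds ⟨q, hq, rfl⟩)).mdifferentiableAt hn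
  have hπU : π '' (S '' (V ×ˢ W)) = V :=
    image_image_prod_eq_left ⟨_, hl₀⟩ fun q _ => congrFun hπS q
  have hFU : F '' (S '' (V ×ˢ W)) = W := image_image_prod_eq_right ⟨_, hn₀⟩ hFSq
  have hSinj : InjOn S (V ×ˢ W) := LeftInvOn.injOn (f₁' := fun u => (π u, F u)) fun q hq =>
    Prod.ext (congrFun hπS q) (hFSq q hq)
  refine ⟨S '' (V ×ˢ W), F, hU, ⟨p₀, ⟨hn₀, hl₀⟩, rfl⟩, hF, ?_, ?_, ?_, ?_, ?_, ?_, ?_⟩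
  · rwa [hFU]
  · rintro _ ⟨q, hq, rfl⟩
    exact surjective_mfderiv_of_comp_eventuallyEq_snd (hFd q hq) (hSdiff.mdifferentiable hn q)
      (hFS q hq)
  · rintro _ ⟨⟨n, lam⟩, hq, rfl⟩
    rw [LinearMap.mem_ker, ← (hSsol lam).2 n]
    exact mfderiv_apply_mfderiv_slice_eq_zero (hFd _ hq) (hSdiff.mdifferentiable hn _)
      (hFS _ hq) _
  · rintro _ ⟨q, hq, rfl⟩
    have h := isCompl_ker_mfderiv_of_comp_eventuallyEq_fst_snd (hSdiff q) hn
      (hπ.mdifferentiable hn _) (hFd q hq) (.of_eq hπS) (hFS q hq)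
    exact ⟨h.inf_eq_bot, h.sup_eq_top⟩
  · rw [hπU, hFU]
    exact mapsTo_image S _
  · rw [hπU, hFU]
    exact hSinj.bijOn_image
  · rw [hπU, hFU]
    exact hFSq

/-- From a complete solution `S : N × Λ → M` of the `π`-Hamilton–Jacobi equation for `(M, X)`
one obtains, around every point of `M`, a local momentum map: a submersion `F : U → Λ`,
transverse to `π`, whose kernel contains `X`, such that `S` restricts to a diffeomorphism of
`π(U) × F(U)` onto `U` with `F ∘ S = p_Λ`. -/
theorem local_momentum_map_from_complete_solution
    {EM HM M EN HN N EL HL Λ : Type*}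
    [NormedAddCommGroup EM] [NormedSpace ℝ EM] [TopologicalSpace HM]
    [TopologicalSpace M] [ChartedSpace HM M]
    [NormedAddCommGroup EN] [NormedSpace ℝ EN] [TopologicalSpace HN]
    [TopologicalSpace N] [ChartedSpace HN N]
    [NormedAddCommGroup EL] [NormedSpace ℝ EL] [TopologicalSpace HL]
    [TopologicalSpace Λ] [ChartedSpace HL Λ]
    {IM : ModelWithCorners ℝ EM HM} {IN : ModelWithCorners ℝ EN HN}
    {IL : ModelWithCorners ℝ EL HL}
    [IsManifold IM ((⊤ : ℕ∞) : WithTop ℕ∞) M] [IsManifold IN ((⊤ : ℕ∞) : WithTop ℕ∞) N]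
    [IsManifold IL ((⊤ : ℕ∞) : WithTop ℕ∞) Λ]
    [FiniteDimensional ℝ EM] [FiniteDimensional ℝ EN] [FiniteDimensional ℝ EL]
    [IM.Boundaryless] [IN.Boundaryless] [IL.Boundaryless]
    -- dim Λ = dim M - dim N
    (hdim : Module.finrank ℝ EL = Module.finrank ℝ EM - Module.finrank ℝ EN)
    -- the fibration
    (π : M → N) (hπ : ContMDiff IM IN (⊤ : ℕ∞) π)
    (hπsurj : Function.Surjective π)
    (hπsub : ∀ m, Function.Surjective (mfderiv IM IN π m))
    -- the (smooth) vector field X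
    (X : ∀ m : M, TangentSpace IM m)
    (hX : ContMDiff IM IM.tangent (⊤ : ℕ∞) (fun m => (⟨m, X m⟩ : TangentBundle IM M)))
    -- S : N × Λ → M, a complete solution of the π-HJE for (M, X)
    (S : N × Λ → M)
    (hSsurj : Function.Surjective S)
    (hSdiff : IsLocalDiffeomorph (IN.prod IL) IM (⊤ : ℕ∞) S)
    (hSsol : ∀ lam : Λ, (∀ n, π (S (n, lam)) = n) ∧
      ∀ n, mfderiv IN IM (fun n' => S (n', lam)) n
          (mfderiv IM IN π (S (n, lam)) (X (S (n, lam)))) = X (S (n, lam))) :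
    ∀ m : M, ∃ (U : Set M) (F : M → Λ),
      IsOpen U ∧ m ∈ U ∧
      -- F is a smooth submersion on U with open image
      ContMDiffOn IM IL (⊤ : ℕ∞) F U ∧
      IsOpen (F '' U) ∧
      (∀ u ∈ U, Function.Surjective (mfderiv IM IL F u)) ∧
      -- (i) X lies in the kernel of F_*
      (∀ u ∈ U, X u ∈
        LinearMap.ker (mfderiv IM IL F u : TangentSpace IM u →ₗ[ℝ] TangentSpace IL (F u))) ∧
      -- (ii) F is transverse to π on U
      (∀ u ∈ U,
        LinearMap.ker (mfderiv IM IN π u : TangentSpace IM u →ₗ[ℝ] TangentSpace IN (π u)) ⊓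
          LinearMap.ker (mfderiv IM IL F u : TangentSpace IM u →ₗ[ℝ] TangentSpace IL (F u)) = ⊥ ∧
        LinearMap.ker (mfderiv IM IN π u : TangentSpace IM u →ₗ[ℝ] TangentSpace IN (π u)) ⊔
          LinearMap.ker (mfderiv IM IL F u : TangentSpace IM u →ₗ[ℝ] TangentSpace IL (F u)) = ⊤) ∧
      -- (iii) S maps π(U) × F(U) into U
      Set.MapsTo S ((π '' U) ×ˢ (F '' U)) U ∧
      -- (iv) S restricted to π(U) × F(U) is a diffeomorphism onto U
      Set.BijOn S ((π '' U) ×ˢ (F '' U)) U ∧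
      -- (v) F ∘ S = p_Λ on π(U) × F(U)
      (∀ p ∈ (π '' U) ×ˢ (F '' U), F (S p) = p.2) :=
  local_momentum_map_from_complete_solution_general π hπ X S hSsurj hSdiff hSsol
end

section
/- Let d := dim M, let Λ be a smooth l-dimensional manifold with l ≤ d, and let F : M → Λ be a fibration such that X(m) ∈ Ker F_{*,m} for every m ∈ M. Then for every m ∈ M there exist an open neighborhood U ⊆ M of m and a smooth submersion π : U → π(U) ⊆ ℝ^{d−l} with π(U) open, such that (π, F|_U) : U → π(U) × F(U) is a diffeomorphism and Σ := (π, F|_U)^{-1} is a complete solution of the π-HJE for (U, X|_U); moreover F(Σ(n,λ)) = λ for all (n,λ) ∈ π(U) × F(U). -/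
/-!
Read `dF` in a chart at `m₀` and complete it by a linear map `L` onto `ℝ^{d-l}` that is
injective on `ker dF`; with `π := L ∘ chart`, the map `(π, F)` has invertible differential at
`m₀`. The inverse function theorem makes `(π, F)` a partial diffeomorphism, which we shrink
so that its image is a product box `V₁ × V₂`; its inverse `S` is the complete solution.
Differentiating `S ∘ (π, F) = id` gives `dσ_λ (dπ v) = dS (dπ v, 0) = dS (dπ v, dF v) = v`
whenever `dF v = 0`, in particular for `v = X`.
-/

open Manifold Set

noncomputable section

theorem LinearMap.exists_bijective_prod_of_surjective {K E G V : Type*} [Field K]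
    [AddCommGroup E] [Module K E] [AddCommGroup G] [Module K G] [AddCommGroup V] [Module K V]
    [FiniteDimensional K E] [FiniteDimensional K G] [FiniteDimensional K V]
    (D : E →ₗ[K] G) (hD : Function.Surjective D)
    (hdim : Module.finrank K V + Module.finrank K G = Module.finrank K E) :
    ∃ L : E →ₗ[K] V, Function.Bijective (L.prod D) := by
  obtain ⟨P, hP⟩ := (LinearMap.ker D).subtype.exists_leftInverse_of_injective (by simp)
  have hrank := D.finrank_range_add_finrank_ker
  rw [LinearMap.range_eq_top.2 hD, finrank_top] at hrank
  let ψ : LinearMap.ker D ≃ₗ[K] V := LinearEquiv.ofFinrankEq _ _ (by omega)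
  have hinj : Function.Injective ((ψ.toLinearMap ∘ₗ P).prod D) := by
    rw [← LinearMap.ker_eq_bot, LinearMap.ker_prod, eq_bot_iff]
    rintro x ⟨hx, hxD⟩
    have hPx : P x = ⟨x, hxD⟩ := LinearMap.congr_fun hP ⟨x, hxD⟩
    simpa [hPx] using hx
  refine ⟨ψ.toLinearMap ∘ₗ P, hinj, ?_⟩
  exact (LinearMap.injective_iff_surjective_of_finrank_eq_finrank
    (by rw [Module.finrank_prod]; omega)).1 hinj

theorem PartialEquiv.image_source_eq_of_target_eq_prod {α β γ : Type*}
    (e : PartialEquiv α (β × γ)) {f : α → β} {g : α → γ}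
    (hfg : EqOn (fun x => (f x, g x)) e e.source) {s : Set β} {t : Set γ}
    (ht : e.target = s ×ˢ t) (hne : e.source.Nonempty) :
    f '' e.source = s ∧ g '' e.source = t := by
  have himage : (fun x => (f x, g x)) '' e.source = s ×ˢ t := by
    rw [hfg.image_eq, e.image_source_eq_target, ht]
  have hst : (s ×ˢ t).Nonempty := himage ▸ hne.image _
  constructor
  · rw [← fst_image_prod s hst.snd, ← himage, image_image]
  · rw [← snd_image_prod hst.fst t, ← himage, image_image]

namespace PartialDiffeomorph

variable {𝕜 : Type*} [NontriviallyNormedField 𝕜] {n : WithTop ℕ∞}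
  {E H M : Type*} [NormedAddCommGroup E] [NormedSpace 𝕜 E] [TopologicalSpace H]
  [TopologicalSpace M] [ChartedSpace H M] {I : ModelWithCorners 𝕜 E H}
  {E' H' N : Type*} [NormedAddCommGroup E'] [NormedSpace 𝕜 E'] [TopologicalSpace H']
  [TopologicalSpace N] [ChartedSpace H' N] {J : ModelWithCorners 𝕜 E' H'}

def ofExtChartAt [I.Boundaryless] [IsManifold I n M] (x : M) :
    PartialDiffeomorph I 𝓘(𝕜, E) M E n where
  toPartialEquiv := extChartAt I x
  open_source := isOpen_extChartAt_source x
  open_target := isOpen_extChartAt_target x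
  contMDiffOn_toFun := extChartAt_source I x ▸ contMDiffOn_extChartAt
  contMDiffOn_invFun := contMDiffOn_extChartAt_symm x

def ofContDiffOn (Φ : OpenPartialHomeomorph E E') (hΦ : ContDiffOn 𝕜 n Φ Φ.source)
    (hΦsymm : ContDiffOn 𝕜 n Φ.symm Φ.target) :
    PartialDiffeomorph 𝓘(𝕜, E) 𝓘(𝕜, E') E E' n where
  __ := Φ
  contMDiffOn_toFun := hΦ.contMDiffOn
  contMDiffOn_invFun := hΦsymm.contMDiffOn

protected def restrOpen (Φ : PartialDiffeomorph I J M N n) (s : Set M) (hs : IsOpen s) :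
    PartialDiffeomorph I J M N n where
  __ := Φ.toOpenPartialHomeomorph.restrOpen s hs
  contMDiffOn_toFun := Φ.contMDiffOn_toFun.mono inter_subset_left
  contMDiffOn_invFun := Φ.contMDiffOn_invFun.mono inter_subset_left

theorem exists_restr_target_eq_prod {N₁ N₂ : Type*} [TopologicalSpace N₁]
    [TopologicalSpace N₂] [ChartedSpace H' (N₁ × N₂)]
    (Φ : PartialDiffeomorph I J M (N₁ × N₂) n) {m : M} (hm : m ∈ Φ.source) :
    ∃ (Ψ : PartialDiffeomorph I J M (N₁ × N₂) n) (V₁ : Set N₁) (V₂ : Set N₂),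
      IsOpen V₁ ∧ IsOpen V₂ ∧ m ∈ Ψ.source ∧ Ψ.source ⊆ Φ.source ∧
      Ψ.target = V₁ ×ˢ V₂ ∧ EqOn Φ Ψ Ψ.source := by
  obtain ⟨V₁, V₂, hV₁, hV₂, hm₁, hm₂, hV⟩ :=
    isOpen_prod_iff.mp Φ.open_target (Φ m).1 (Φ m).2 (Φ.map_source hm)
  exact ⟨(Φ.symm.restrOpen _ (hV₁.prod hV₂)).symm, V₁, V₂, hV₁, hV₂,
    ⟨hm, hm₁, hm₂⟩, inter_subset_left, inter_eq_right.2 hV, eqOn_refl _ _⟩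

end PartialDiffeomorph

section ProductDifferential

variable {𝕜 : Type*} [NontriviallyNormedField 𝕜]
  {E H M : Type*} [NormedAddCommGroup E] [NormedSpace 𝕜 E] [TopologicalSpace H]
  [TopologicalSpace M] [ChartedSpace H M] {I : ModelWithCorners 𝕜 E H}
  {EP HP P : Type*} [NormedAddCommGroup EP] [NormedSpace 𝕜 EP] [TopologicalSpace HP]
  [TopologicalSpace P] [ChartedSpace HP P] {IP : ModelWithCorners 𝕜 EP HP}
  {EL HL Λ : Type*} [NormedAddCommGroup EL] [NormedSpace 𝕜 EL] [TopologicalSpace HL]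
  [TopologicalSpace Λ] [ChartedSpace HL Λ] {IL : ModelWithCorners 𝕜 EL HL}
  {π : M → P} {F : M → Λ} {u : M}

theorem surjective_mfderiv_of_surjective_mfderiv_prodMk (hπ : MDifferentiableAt I IP π u)
    (hF : MDifferentiableAt I IL F u)
    (h : Function.Surjective (mfderiv I (IP.prod IL) (fun x => (π x, F x)) u)) :
    Function.Surjective (mfderiv I IP π u) := by
  rw [mfderiv_prodMk hπ hF] at h
  intro w
  obtain ⟨v, hv⟩ := h (w, 0)
  exact ⟨v, congrArg Prod.fst hv⟩

theorem mfderiv_slice_apply_of_leftInverse {S : P × Λ → M}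
    (hS : (fun x => S (π x, F x)) =ᶠ[nhds u] id) (hπ : MDifferentiableAt I IP π u)
    (hF : MDifferentiableAt I IL F u) (hSd : MDifferentiableAt (IP.prod IL) I S (π u, F u))
    {v : TangentSpace I u} (hv : mfderiv I IL F u v = 0) :
    mfderiv IP I (fun p => S (p, F u)) (π u) (mfderiv I IP π u v) = v := by
  have hid : (mfderiv (IP.prod IL) I S (π u, F u)).comp
      (mfderiv I (IP.prod IL) (fun x => (π x, F x)) u) = ContinuousLinearMap.id 𝕜 _ := by
    rw [← mfderiv_comp u hSd (hπ.prodMk hF), ← mfderiv_id]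
    exact hS.mfderiv_eq
  rw [mfderiv_prodMk hπ hF] at hid
  have hslice : mfderiv IP I (fun p => S (p, F u)) (π u) =
      (mfderiv (IP.prod IL) I S (π u, F u)).comp
        (mfderiv IP (IP.prod IL) (fun p => (p, F u)) (π u)) :=
    mfderiv_comp (π u) hSd (mdifferentiableAt_id.prodMk mdifferentiableAt_const)
  rw [mfderiv_prod_left] at hslice
  have hpair : (mfderiv I IP π u).prod (mfderiv I IL F u) v =
      ContinuousLinearMap.inl 𝕜 _ _ (mfderiv I IP π u v) := Prod.ext rfl hv
  rw [hslice]
  exact (congrArg (mfderiv (IP.prod IL) I S (π u, F u)) hpair).symm.trans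
    (ContinuousLinearMap.ext_iff.1 hid v)

end ProductDifferential

section InverseFunction

variable {𝕂 : Type*} [RCLike 𝕂] {n : WithTop ℕ∞}
  {E H M : Type*} [NormedAddCommGroup E] [NormedSpace 𝕂 E] [TopologicalSpace H]
  [TopologicalSpace M] [ChartedSpace H M] {I : ModelWithCorners 𝕂 E H}
  {E' H' N : Type*} [NormedAddCommGroup E'] [NormedSpace 𝕂 E'] [TopologicalSpace H']
  [TopologicalSpace N] [ChartedSpace H' N] {J : ModelWithCorners 𝕂 E' H'}

theorem ContDiffOn.exists_openPartialHomeomorph_of_hasFDerivAt_equiv [CompleteSpace E]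
    {f : E → E'} {f' : E ≃L[𝕂] E'} {s : Set E} {a : E} (hf : ContDiffOn 𝕂 n f s)
    (hs : IsOpen s) (ha : a ∈ s) (hf' : HasFDerivAt f (f' : E →L[𝕂] E') a) (hn : 1 ≤ n) :
    ∃ Φ : OpenPartialHomeomorph E E', a ∈ Φ.source ∧ Φ.source ⊆ s ∧ ⇑Φ = f ∧
      ContDiffOn 𝕂 n Φ.symm Φ.target := by
  have hn0 : n ≠ 0 := by rintro rfl; simp at hn
  -- Shrinking to where `fderiv f` is invertible makes `Φ.symm` smooth on all of its target.
  let s' := s ∩ fderiv 𝕂 f ⁻¹' range ((↑) : (E ≃L[𝕂] E') → E →L[𝕂] E')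
  have hs' : IsOpen s' :=
    (hf.continuousOn_fderiv_of_isOpen hs hn).isOpen_inter_preimage hs ContinuousLinearEquiv.isOpen
  have hfa := hf.contDiffAt (hs.mem_nhds ha)
  let Φ := (hfa.toOpenPartialHomeomorph f hf' hn0).restrOpen s' hs'
  refine ⟨Φ, ⟨hfa.mem_toOpenPartialHomeomorph_source hf' hn0, ha, by simp [hf'.fderiv]⟩,
    fun x hx => hx.2.1, rfl, fun y hy => ?_⟩
  have hx := Φ.map_target hy
  obtain ⟨f'', hf''⟩ := hx.2.2
  have hfx := hf.contDiffAt (hs.mem_nhds hx.2.1)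
  refine (Φ.contDiffAt_symm (f₀' := f'') hy ?_ hfx).contDiffWithinAt
  rw [hf'']
  exact (hfx.differentiableAt hn0).hasFDerivAt

theorem ContMDiffOn.exists_partialDiffeomorph_of_hasMFDerivAt_equiv [CompleteSpace E]
    [I.Boundaryless] [J.Boundaryless] [IsManifold I n M] [IsManifold J n N]
    {G : M → N} {s : Set M} {m : M} (hG : ContMDiffOn I J n G s) (hs : IsOpen s) (hm : m ∈ s)
    (hn : 1 ≤ n) {G' : E ≃L[𝕂] E'} (hG' : HasMFDerivAt I J G m (G' : E →L[𝕂] E')) :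
    ∃ Φ : PartialDiffeomorph I J M N n,
      m ∈ Φ.source ∧ Φ.source ⊆ s ∧ EqOn G Φ Φ.source := by
  set c := extChartAt I m
  set e := extChartAt J (G m)
  let O := c.target ∩ c.symm ⁻¹' (s ∩ G ⁻¹' e.source)
  have hO : IsOpen O :=
    (continuousOn_extChartAt_symm m).isOpen_inter_preimage (isOpen_extChartAt_target m)
      (hG.continuousOn.isOpen_inter_preimage hs (isOpen_extChartAt_source (G m)))
  have hmO : c m ∈ O := ⟨mem_extChartAt_target m, by simp [c, hm, e]⟩
  have hGO : ContDiffOn 𝕂 n (writtenInExtChartAt I J m G) O := by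
    refine ContMDiffOn.contDiffOn ?_
    have he : ContMDiffOn J 𝓘(𝕂, E') n e e.source :=
      extChartAt_source J (G m) ▸ contMDiffOn_extChartAt
    exact he.comp (hG.comp ((contMDiffOn_extChartAt_symm m).mono inter_subset_left)
      fun x hx => hx.2.1) fun x hx => hx.2.2
  have hGm : HasFDerivAt (writtenInExtChartAt I J m G) (G' : E →L[𝕂] E') (c m) :=
    hG'.2.hasFDerivAt (by simp [I.range_eq_univ])
  obtain ⟨Ψ, hmΨ, hΨO, hΨ, hΨsymm⟩ :=
    hGO.exists_openPartialHomeomorph_of_hasFDerivAt_equiv hO hmO hGm hn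
  let Φ := (PartialDiffeomorph.ofExtChartAt (I := I) (n := n) m).trans
    ((PartialDiffeomorph.ofContDiffOn Ψ (hΨ ▸ hGO.mono hΨO) hΨsymm).trans
      (PartialDiffeomorph.ofExtChartAt (I := J) (n := n) (G m)).symm)
  have hsource : ∀ x ∈ Φ.source, c x ∈ O ∧ c.symm (c x) = x :=
    fun x hx => ⟨hΨO hx.2.1, c.left_inv hx.1⟩
  refine ⟨Φ, ⟨mem_extChartAt_source m, hmΨ, ?_⟩, fun x hx => ?_, fun x hx => ?_⟩
  · show Ψ (c m) ∈ e.target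
    rw [hΨ, writtenInExtChartAt, Function.comp_apply, Function.comp_apply,
      c.left_inv (mem_extChartAt_source m)]
    exact e.map_source (mem_extChartAt_source (G m))
  · obtain ⟨⟨-, hxs, -⟩, hx⟩ := hsource x hx
    rwa [hx] at hxs
  · obtain ⟨⟨-, -, hxe⟩, hx⟩ := hsource x hx
    rw [hx] at hxe
    show G x = e.symm (Ψ (c x))
    rw [hΨ, writtenInExtChartAt, Function.comp_apply, Function.comp_apply, hx, e.left_inv hxe]

variable {EL HL Λ V : Type*} [NormedAddCommGroup EL] [NormedSpace 𝕂 EL] [TopologicalSpace HL]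
  [TopologicalSpace Λ] [ChartedSpace HL Λ] {IL : ModelWithCorners 𝕂 EL HL}
  [NormedAddCommGroup V] [NormedSpace 𝕂 V]

theorem exists_contMDiffOn_hasMFDerivAt_prodMk_equiv [FiniteDimensional 𝕂 E]
    [FiniteDimensional 𝕂 EL] [FiniteDimensional 𝕂 V] [IsManifold I n M]
    (hn : 1 ≤ n) {F : M → Λ} {m : M} (hF : MDifferentiableAt I IL F m)
    (hsurj : Function.Surjective (mfderiv I IL F m))
    (hdim : Module.finrank 𝕂 V + Module.finrank 𝕂 EL = Module.finrank 𝕂 E) :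
    ∃ π : M → V, ContMDiffOn I 𝓘(𝕂, V) n π (extChartAt I m).source ∧
      ∃ G' : E ≃L[𝕂] V × EL,
        HasMFDerivAt I (𝓘(𝕂, V).prod IL) (fun x => (π x, F x)) m
          (G' : E →L[𝕂] V × EL) := by
  obtain ⟨L, hL⟩ := (show E →L[𝕂] EL from mfderiv I IL F m).toLinearMap
    |>.exists_bijective_prod_of_surjective hsurj hdim
  have : IsManifold I 1 M := .of_le hn
  let L' := LinearMap.toContinuousLinearMap L
  refine ⟨fun x => L' (extChartAt I m x), ?_,
    (LinearEquiv.ofBijective _ hL).toContinuousLinearEquiv, ?_⟩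
  · exact L'.contMDiff.comp_contMDiffOn (extChartAt_source I m ▸ contMDiffOn_extChartAt)
  · have h := (L'.hasMFDerivAt.comp m
      (mdifferentiableAt_extChartAt (mem_chart_source H m)).hasMFDerivAt).prodMk hF.hasMFDerivAt
    rw [mfderiv_extChartAt_self] at h
    exact h

theorem exists_partialDiffeomorph_onto_prod_eqOn_prodMk [I.Boundaryless] [IL.Boundaryless]
    [FiniteDimensional 𝕂 E] [FiniteDimensional 𝕂 EL] [FiniteDimensional 𝕂 V]
    [IsManifold I n M] [IsManifold IL n Λ] (hn : 1 ≤ n) {F : M → Λ} (hF : ContMDiff I IL n F)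
    {m : M} (hsurj : Function.Surjective (mfderiv I IL F m))
    (hdim : Module.finrank 𝕂 V + Module.finrank 𝕂 EL = Module.finrank 𝕂 E) :
    ∃ (π : M → V) (Ψ : PartialDiffeomorph I (𝓘(𝕂, V).prod IL) M (V × Λ) n)
      (V₁ : Set V) (V₂ : Set Λ), IsOpen V₁ ∧ IsOpen V₂ ∧ m ∈ Ψ.source ∧
      Ψ.target = V₁ ×ˢ V₂ ∧ ContMDiffOn I 𝓘(𝕂, V) n π Ψ.source ∧
      EqOn (fun x => (π x, F x)) Ψ Ψ.source := by
  have hn0 : n ≠ 0 := by rintro rfl; simp at hn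
  have : CompleteSpace E := FiniteDimensional.complete 𝕂 E
  obtain ⟨π, hπ, G', hG'⟩ := exists_contMDiffOn_hasMFDerivAt_prodMk_equiv hn
    (hF.mdifferentiableAt hn0) hsurj hdim
  obtain ⟨Φ, hmΦ, hΦ, hGΦ⟩ :=
    (hπ.prodMk hF.contMDiffOn).exists_partialDiffeomorph_of_hasMFDerivAt_equiv
      (isOpen_extChartAt_source m) (mem_extChartAt_source m) hn hG'
  obtain ⟨Ψ, V₁, V₂, hV₁, hV₂, hmΨ, hΨΦ, hΨV, hΦΨ⟩ :=
    Φ.exists_restr_target_eq_prod hmΦ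
  exact ⟨π, Ψ, V₁, V₂, hV₁, hV₂, hmΨ, hΨV, hπ.mono (hΨΦ.trans hΦ),
    fun x hx => (hGΦ (hΨΦ hx)).trans (hΦΨ hx)⟩

end InverseFunction

theorem local_complete_solution_from_first_integrals_no_fibration_general
    {EM HM M EL HL Λ : Type*}
    [NormedAddCommGroup EM] [NormedSpace ℝ EM] [TopologicalSpace HM]
    [TopologicalSpace M] [ChartedSpace HM M]
    [NormedAddCommGroup EL] [NormedSpace ℝ EL] [TopologicalSpace HL]
    [TopologicalSpace Λ] [ChartedSpace HL Λ]
    {IM : ModelWithCorners ℝ EM HM} {IL : ModelWithCorners ℝ EL HL}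
    [IsManifold IM (⊤ : ℕ∞) M] [IsManifold IL (⊤ : ℕ∞) Λ]
    [FiniteDimensional ℝ EM] [FiniteDimensional ℝ EL]
    [IM.Boundaryless] [IL.Boundaryless]
    -- dimensions: dim M = d, dim Λ = l ≤ d
    {d l : ℕ}
    (hd : Module.finrank ℝ EM = d) (hl : Module.finrank ℝ EL = l) (hld : l ≤ d)
    -- the (smooth) vector field X
    (X : ∀ m : M, TangentSpace IM m)
    -- the fibration F : M → Λ of first integrals of X
    (F : M → Λ) (hF : ContMDiff IM IL (⊤ : ℕ∞) F)
    (hFsub : ∀ m, Function.Surjective (mfderiv IM IL F m))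
    (hker : ∀ m, X m ∈ LinearMap.ker (mfderiv IM IL F m).toLinearMap) :
    ∀ m : M, ∃ (U : Set M) (π : M → EuclideanSpace ℝ (Fin (d - l))),
      IsOpen U ∧ m ∈ U ∧
      -- π is a smooth submersion on U with open image
      ContMDiffOn IM 𝓘(ℝ, EuclideanSpace ℝ (Fin (d - l))) (⊤ : ℕ∞) π U ∧
      IsOpen (π '' U) ∧ IsOpen (F '' U) ∧
      (∀ u ∈ U, Function.Surjective (mfderiv IM 𝓘(ℝ, EuclideanSpace ℝ (Fin (d - l))) π u)) ∧
      -- (π, F)|_U is a diffeomorphism onto π(U) × F(U)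
      Set.BijOn (fun u => (π u, F u)) U ((π '' U) ×ˢ (F '' U)) ∧
      ∃ S : EuclideanSpace ℝ (Fin (d - l)) × Λ → M,
        -- S is the inverse of (π, F)|_U
        (∀ u ∈ U, S (π u, F u) = u) ∧
        (∀ p ∈ (π '' U) ×ˢ (F '' U), (π (S p), F (S p)) = p) ∧
        Set.MapsTo S ((π '' U) ×ˢ (F '' U)) U ∧
        Set.SurjOn S ((π '' U) ×ˢ (F '' U)) U ∧
        -- S is smooth (a local diffeomorphism) on π(U) × F(U)
        ContMDiffOn ((𝓘(ℝ, EuclideanSpace ℝ (Fin (d - l)))).prod IL) IM (⊤ : ℕ∞) S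
          ((π '' U) ×ˢ (F '' U)) ∧
        IsLocalDiffeomorphOn ((𝓘(ℝ, EuclideanSpace ℝ (Fin (d - l)))).prod IL) IM (⊤ : ℕ∞) S
          ((π '' U) ×ˢ (F '' U)) ∧
        -- each partial map σ_λ is a section of π|_U solving the π|_U-HJE for (U, X|_U)
        (∀ lam ∈ F '' U, ∀ n ∈ π '' U,
          π (S (n, lam)) = n ∧
          mfderiv 𝓘(ℝ, EuclideanSpace ℝ (Fin (d - l))) IM (fun n' => S (n', lam)) n
              (mfderiv IM 𝓘(ℝ, EuclideanSpace ℝ (Fin (d - l))) π (S (n, lam))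
                (X (S (n, lam)))) = X (S (n, lam))) ∧
        -- F is the global momentum map related to S
        (∀ p ∈ (π '' U) ×ˢ (F '' U), F (S p) = p.2) := by
  intro m₀
  obtain ⟨π, Ψ, V₁, V₂, hV₁, hV₂, hm₀, hΨV, hπ, hGΨ⟩ :=
    exists_partialDiffeomorph_onto_prod_eqOn_prodMk (V := EuclideanSpace ℝ (Fin (d - l)))
      (by simp) hF (hFsub m₀) (by rw [finrank_euclideanSpace_fin, hd, hl]; omega)
  have hFd : MDifferentiable IM IL F := hF.mdifferentiable (by simp)
  have hπd : ∀ u ∈ Ψ.source, MDifferentiableAt IM 𝓘(ℝ, _) π u := fun u hu =>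
    (hπ.contMDiffAt (Ψ.open_source.mem_nhds hu)).mdifferentiableAt (by simp)
  have hGt : ∀ u ∈ Ψ.source, (π u, F u) ∈ Ψ.target := fun u hu => by
    rw [show (π u, F u) = Ψ u from hGΨ hu]
    exact Ψ.map_source hu
  have hSG : ∀ u ∈ Ψ.source, Ψ.symm (π u, F u) = u := fun u hu =>
    (congrArg Ψ.symm (hGΨ hu)).trans (Ψ.left_inv hu)
  have hGS : ∀ p ∈ Ψ.target, (π (Ψ.symm p), F (Ψ.symm p)) = p := fun p hp =>
    (hGΨ (Ψ.map_target hp)).trans (Ψ.right_inv hp)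
  obtain ⟨himπ, himF⟩ :=
    Ψ.toPartialEquiv.image_source_eq_of_target_eq_prod hGΨ hΨV ⟨m₀, hm₀⟩
  refine ⟨Ψ.source, π, ?_⟩
  rw [himπ, himF, ← hΨV]
  refine ⟨Ψ.open_source, hm₀, hπ, hV₁, hV₂, fun u hu => ?_, Ψ.bijOn.congr hGΨ.symm,
    Ψ.symm, hSG, hGS, Ψ.symm.mapsTo, Ψ.symm.surjOn, Ψ.symm.contMDiffOn,
    fun p => ⟨Ψ.symm, p.2, eqOn_refl _ _⟩, ?_, fun p hp => congrArg Prod.snd (hGS p hp)⟩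
  · exact surjective_mfderiv_of_surjective_mfderiv_prodMk (hπd u hu) (hFd u)
      (IsLocalDiffeomorphAt.mfderivToContinuousLinearEquiv ⟨Ψ, hu, hGΨ⟩ (by simp)).surjective
  · intro lam hlam n hn
    have hp : (n, lam) ∈ Ψ.target := hΨV ▸ ⟨hn, hlam⟩
    obtain ⟨u, hu, rfl, rfl⟩ : ∃ u ∈ Ψ.source, π u = n ∧ F u = lam :=
      ⟨_, Ψ.map_target hp, Prod.ext_iff.1 (hGS _ hp)⟩
    rw [hSG u hu]
    exact ⟨rfl, mfderiv_slice_apply_of_leftInverse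
      (Filter.eventuallyEq_of_mem (Ψ.open_source.mem_nhds hu) hSG) (hπd u hu) (hFd u)
      (Ψ.symm.mdifferentiableAt (by simp) (hGt u hu)) (hker u)⟩

/-- From a fibration `F : M → Λ` of first integrals of `X` one obtains, around every point of
`M`, a submersion `π : U → ℝ^{d-l}` transverse to `F` such that the inverse `S` of `(π, F)|_U`
is a complete solution of the `π`-Hamilton–Jacobi equation for `(U, X|_U)`, with
`F ∘ S = p_Λ`. -/
theorem local_complete_solution_from_first_integrals_no_fibration
    {EM HM M EL HL Λ : Type*}
    [NormedAddCommGroup EM] [NormedSpace ℝ EM] [TopologicalSpace HM]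
    [TopologicalSpace M] [ChartedSpace HM M]
    [NormedAddCommGroup EL] [NormedSpace ℝ EL] [TopologicalSpace HL]
    [TopologicalSpace Λ] [ChartedSpace HL Λ]
    {IM : ModelWithCorners ℝ EM HM} {IL : ModelWithCorners ℝ EL HL}
    [IsManifold IM (⊤ : ℕ∞) M] [IsManifold IL (⊤ : ℕ∞) Λ]
    [FiniteDimensional ℝ EM] [FiniteDimensional ℝ EL]
    [IM.Boundaryless] [IL.Boundaryless]
    -- dimensions: dim M = d, dim Λ = l ≤ d
    {d l : ℕ}
    (hd : Module.finrank ℝ EM = d) (hl : Module.finrank ℝ EL = l) (hld : l ≤ d)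
    -- the (smooth) vector field X
    (X : ∀ m : M, TangentSpace IM m)
    (hX : ContMDiff IM IM.tangent (⊤ : ℕ∞) (fun m => (⟨m, X m⟩ : TangentBundle IM M)))
    -- the fibration F : M → Λ of first integrals of X
    (F : M → Λ) (hF : ContMDiff IM IL (⊤ : ℕ∞) F)
    (hFsurj : Function.Surjective F)
    (hFsub : ∀ m, Function.Surjective (mfderiv IM IL F m))
    (hker : ∀ m, X m ∈ LinearMap.ker (mfderiv IM IL F m).toLinearMap) :
    ∀ m : M, ∃ (U : Set M) (π : M → EuclideanSpace ℝ (Fin (d - l))),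
      IsOpen U ∧ m ∈ U ∧
      -- π is a smooth submersion on U with open image
      ContMDiffOn IM 𝓘(ℝ, EuclideanSpace ℝ (Fin (d - l))) (⊤ : ℕ∞) π U ∧
      IsOpen (π '' U) ∧ IsOpen (F '' U) ∧
      (∀ u ∈ U, Function.Surjective (mfderiv IM 𝓘(ℝ, EuclideanSpace ℝ (Fin (d - l))) π u)) ∧
      -- (π, F)|_U is a diffeomorphism onto π(U) × F(U)
      Set.BijOn (fun u => (π u, F u)) U ((π '' U) ×ˢ (F '' U)) ∧
      ∃ S : EuclideanSpace ℝ (Fin (d - l)) × Λ → M,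
        -- S is the inverse of (π, F)|_U
        (∀ u ∈ U, S (π u, F u) = u) ∧
        (∀ p ∈ (π '' U) ×ˢ (F '' U), (π (S p), F (S p)) = p) ∧
        Set.MapsTo S ((π '' U) ×ˢ (F '' U)) U ∧
        Set.SurjOn S ((π '' U) ×ˢ (F '' U)) U ∧
        -- S is smooth (a local diffeomorphism) on π(U) × F(U)
        ContMDiffOn ((𝓘(ℝ, EuclideanSpace ℝ (Fin (d - l)))).prod IL) IM (⊤ : ℕ∞) S
          ((π '' U) ×ˢ (F '' U)) ∧
        IsLocalDiffeomorphOn ((𝓘(ℝ, EuclideanSpace ℝ (Fin (d - l)))).prod IL) IM (⊤ : ℕ∞) S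
          ((π '' U) ×ˢ (F '' U)) ∧
        -- each partial map σ_λ is a section of π|_U solving the π|_U-HJE for (U, X|_U)
        (∀ lam ∈ F '' U, ∀ n ∈ π '' U,
          π (S (n, lam)) = n ∧
          mfderiv 𝓘(ℝ, EuclideanSpace ℝ (Fin (d - l))) IM (fun n' => S (n', lam)) n
              (mfderiv IM 𝓘(ℝ, EuclideanSpace ℝ (Fin (d - l))) π (S (n, lam))
                (X (S (n, lam)))) = X (S (n, lam))) ∧
        -- F is the global momentum map related to S
        (∀ p ∈ (π '' U) ×ˢ (F '' U), F (S p) = p.2) :=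
  local_complete_solution_from_first_integrals_no_fibration_general hd hl hld X F hF hFsub hker
end
end
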